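/- arXiv:2405.16022 — 12 statements merged into one kernel-verified Lean document; each statement's English description precedes it below -/
import Mathlib

section
/- For any ring R, the Zhou radical δ(R) is a semiprime ideal: if a ∈ R satisfies aRa ⊆ δ(R), then a ∈ δ(R). -/
/-!
Every maximal right ideal `I` is prime: if `a ∉ I` then `i + a c = 1` for some `i ∈ I`, so
`b = i b + a c b ∈ I` whenever `a R b ⊆ I`. The Zhou radical is an intersection of such ideals.
-/

open MulOpposite

/-- A right ideal `I` of `R` is essential if it intersects every nonzero right ideal
nontrivially. Right ideals are formalized as submodules of `R` over `Rᵐᵒᵖ`. -/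
def IsEssentialRI (R : Type*) [Ring R] (I : Submodule Rᵐᵒᵖ R) : Prop :=
  ∀ K : Submodule Rᵐᵒᵖ R, K ≠ ⊥ → I ⊓ K ≠ ⊥

/-- The Zhou radical of a ring `R`: the intersection of all essential maximal right
ideals of `R` (all of `R` if there are none). -/
def zhouRadical (R : Type*) [Ring R] : Set R :=
  {x : R | ∀ I : Submodule Rᵐᵒᵖ R, IsCoatom I → IsEssentialRI R I → x ∈ I}

section MaximalRightIdeal

variable {R : Type*} [Ring R] {I : Submodule Rᵐᵒᵖ R}

theorem exists_add_mul_eq_one_of_isCoatom (hI : IsCoatom I) {a : R} (ha : a ∉ I) :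
    ∃ i ∈ I, ∃ c : R, i + a * c = 1 := by
  have hsup : I ⊔ Submodule.span Rᵐᵒᵖ {a} = ⊤ :=
    hI.2 _ (lt_of_le_of_ne le_sup_left fun he =>
      ha (he ▸ Submodule.mem_sup_right (Submodule.mem_span_singleton_self a)))
  obtain ⟨i, hi, s, hs, hsum⟩ := Submodule.mem_sup.mp (hsup ▸ Submodule.mem_top : (1 : R) ∈ _)
  obtain ⟨c, rfl⟩ := Submodule.mem_span_singleton.mp hs
  exact ⟨i, hi, c.unop, by rwa [← smul_eq_mul_unop]⟩

theorem mem_of_mul_mul_mem_of_isCoatom (hI : IsCoatom I) {a b : R}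
    (hab : ∀ r, a * r * b ∈ I) (ha : a ∉ I) : b ∈ I := by
  obtain ⟨i, hi, c, hsum⟩ := exists_add_mul_eq_one_of_isCoatom hI ha
  have hb : b = i * b + a * c * b := by rw [← add_mul, hsum, one_mul]
  rw [hb]
  exact I.add_mem (I.smul_mem (op b) hi) (hab c)

end MaximalRightIdeal

/-- For any ring `R`, the Zhou radical `δ(R)` is a semiprime ideal:
if `aRa ⊆ δ(R)` then `a ∈ δ(R)`. -/
theorem zhouRadical_semiprime (R : Type*) [Ring R] (a : R)
    (h : ∀ r : R, a * r * a ∈ zhouRadical R) : a ∈ zhouRadical R := by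
  intro I hI hess
  by_contra ha
  exact ha (mem_of_mul_mul_mem_of_isCoatom hI (fun r => h r I hI hess) ha)
end

section
/- Let R be a ring and I an ideal of R. Then δ(I) ⊆ I ∩ δ(R), viewing I as a ring (possibly without identity) with its Zhou radical δ(I) defined via essential maximal right ideals of I. -/
open MulOpposite

/-- `J` is a right ideal of the (possibly non-unital) ring given by the subset `I` of `R`:
`J ⊆ I`, `J` is an additive subgroup, and `J` is closed under right multiplication by
elements of `I`. -/
def IsRI {R : Type*} [Ring R] (I J : Set R) : Prop :=
  J ⊆ I ∧ (0 : R) ∈ J ∧ (∀ a ∈ J, ∀ b ∈ J, a + b ∈ J) ∧ (∀ a ∈ J, -a ∈ J) ∧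
    ∀ a ∈ J, ∀ y ∈ I, a * y ∈ J

/-- `J` is a maximal right ideal of the ring given by the subset `I`. -/
def IsMaxRI {R : Type*} [Ring R] (I J : Set R) : Prop :=
  IsRI I J ∧ J ≠ I ∧ ∀ K : Set R, IsRI I K → J ⊆ K → K = J ∨ K = I

/-- `J` is an essential right ideal of the ring given by the subset `I`: it intersects
every nonzero right ideal of `I` nontrivially. -/
def IsEssRI {R : Type*} [Ring R] (I J : Set R) : Prop :=
  ∀ K : Set R, IsRI I K → K ≠ ({0} : Set R) → J ∩ K ≠ ({0} : Set R)

/-- The Zhou radical of the (possibly non-unital) ring given by the subset `I` of `R`: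
the intersection of all essential maximal right ideals of `I`. -/
def zhouSet {R : Type*} [Ring R] (I : Set R) : Set R :=
  {x : R | x ∈ I ∧ ∀ J : Set R, IsMaxRI I J → IsEssRI I J → x ∈ J}

/-!
If `I ⊄ M` for an essential maximal right ideal `M` of `R`, then `I ∩ M` is an essential maximal
right ideal of the ring `I`, so `δ(I) ⊆ I ∩ M ⊆ M`. Both properties come from writing
`1 = m + a * r` with `m ∈ M` for some `a ∉ M`: for maximality, `y = m * y + a * (r * y)` for every
`y ∈ I`; for essentiality, a nonzero right ideal `P` of `I` with `P ∩ M = 0` would contain such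
an `a` with `a * r * a = a`, hence the whole right ideal `a * R` of `R`, which meets `M`.
-/

section

variable {R : Type*} [Ring R]

theorem Submodule.mul_mem_right {M : Submodule Rᵐᵒᵖ R} {m : R} (hm : m ∈ M)
    (r : R) : m * r ∈ M := by
  simpa using M.smul_mem (op r) hm

theorem IsCoatom.exists_add_mul_eq_one {M : Submodule Rᵐᵒᵖ R} (hM : IsCoatom M) {a : R}
    (ha : a ∉ M) : ∃ m ∈ M, ∃ r : R, m + a * r = 1 := by
  have hsup : M ⊔ Submodule.span Rᵐᵒᵖ {a} = ⊤ :=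
    hM.2 _ (left_lt_sup.2 fun h => ha (h (Submodule.mem_span_singleton_self a)))
  obtain ⟨m, hm, s, hs, hms⟩ := Submodule.mem_sup.1 (hsup ▸ Submodule.mem_top : (1 : R) ∈ _)
  obtain ⟨r, rfl⟩ := Submodule.mem_span_singleton.1 hs
  exact ⟨m, hm, r.unop, by simpa [smul_eq_mul_unop] using hms⟩

theorem IsRI.mul_mem_of_mul_mul_eq {I : TwoSidedIdeal R} {P : Set R} (hP : IsRI (I : Set R) P)
    {a r : R} (ha : a ∈ P) (hreg : a * r * a = a) (s : R) : a * s ∈ P := by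
  rw [← hreg, mul_assoc, mul_assoc]
  exact hP.2.2.2.2 a ha _ (I.mul_mem_left r _ (I.mul_mem_right a s (hP.1 ha)))

namespace TwoSidedIdeal

variable (I : TwoSidedIdeal R) {M : Submodule Rᵐᵒᵖ R}

theorem isRI_inter : IsRI (I : Set R) (I ∩ M) :=
  ⟨Set.inter_subset_left, ⟨I.zero_mem, M.zero_mem⟩,
    fun _ ha _ hb => ⟨I.add_mem ha.1 hb.1, M.add_mem ha.2 hb.2⟩,
    fun _ ha => ⟨I.neg_mem ha.1, M.neg_mem ha.2⟩,
    fun a ha y _ => ⟨I.mul_mem_right a y ha.1, M.mul_mem_right ha.2 y⟩⟩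

theorem isMaxRI_inter (hM : IsCoatom M) (hIM : ¬(I : Set R) ⊆ M) :
    IsMaxRI (I : Set R) (I ∩ M) := by
  refine ⟨I.isRI_inter, fun h => hIM (h ▸ Set.inter_subset_right), fun K hK hJK => ?_⟩
  by_cases hKJ : K ⊆ I ∩ M
  · exact .inl (hKJ.antisymm hJK)
  obtain ⟨a, haK, haJ⟩ := Set.not_subset.1 hKJ
  obtain ⟨m, hm, r, hmr⟩ := hM.exists_add_mul_eq_one fun h => haJ ⟨hK.1 haK, h⟩
  refine .inr (hK.1.antisymm fun y hy => ?_)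
  have hy_eq : m * y + a * (r * y) = y := by rw [← mul_assoc, ← add_mul, hmr, one_mul]
  rw [← hy_eq]
  exact hK.2.2.1 _ (hJK ⟨I.mul_mem_left m y hy, M.mul_mem_right hm y⟩) _
    (hK.2.2.2.2 a haK _ (I.mul_mem_left r y hy))

theorem isEssRI_inter (hM : IsCoatom M) (hMe : IsEssentialRI R M) :
    IsEssRI (I : Set R) (I ∩ M) := by
  intro P hP hP0 hJP
  have eq_zero : ∀ x ∈ P, x ∈ M → x = 0 := fun x hxP hxM =>
    (hJP ▸ ⟨⟨hP.1 hxP, hxM⟩, hxP⟩ : x ∈ ({0} : Set R))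
  obtain ⟨a, haP, ha0⟩ : ∃ a ∈ P, a ≠ 0 := by
    by_contra! h
    exact hP0 (Set.eq_singleton_iff_unique_mem.2 ⟨hP.2.1, h⟩)
  obtain ⟨m, hm, r, hmr⟩ := hM.exists_add_mul_eq_one fun h => ha0 (eq_zero a haP h)
  obtain rfl := eq_sub_of_add_eq hmr
  have hreg : a * r * a = a := by
    have hma : (1 - a * r) * a = a + -(a * (r * a)) := by noncomm_ring
    have hmaP : (1 - a * r) * a ∈ P := hma ▸
      hP.2.2.1 _ haP _ (hP.2.2.2.1 _ (hP.2.2.2.2 a haP _ (I.mul_mem_left r a (hP.1 haP))))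
    have hma0 := eq_zero _ hmaP (M.mul_mem_right hm a)
    rwa [sub_mul, one_mul, sub_eq_zero, eq_comm] at hma0
  have hspan : Submodule.span Rᵐᵒᵖ {a} ≠ ⊥ := by simpa using ha0
  obtain ⟨z, ⟨hzM, hz⟩, hz0⟩ := (Submodule.ne_bot_iff _).1 (hMe _ hspan)
  obtain ⟨s, rfl⟩ := Submodule.mem_span_singleton.1 hz
  have hzP : a * s.unop ∈ P := hP.mul_mem_of_mul_mul_eq haP hreg s.unop
  exact hz0 (eq_zero _ (by simpa [smul_eq_mul_unop] using hzP) hzM)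

end TwoSidedIdeal

end

/-- Let `I` be a (two-sided) ideal of `R`. Then `δ(I) ⊆ I ∩ δ(R)`, where `δ(I)` is the
Zhou radical of `I` viewed as a ring possibly without identity. -/
theorem zhouSet_ideal_subset (R : Type*) [Ring R] (I : Set R)
    (h0 : (0 : R) ∈ I) (hadd : ∀ a ∈ I, ∀ b ∈ I, a + b ∈ I) (hneg : ∀ a ∈ I, -a ∈ I)
    (hmulr : ∀ a ∈ I, ∀ r : R, a * r ∈ I) (hmull : ∀ a ∈ I, ∀ r : R, r * a ∈ I) :
    zhouSet I ⊆ I ∩ zhouRadical R := by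
  obtain ⟨I, rfl⟩ : ∃ T : TwoSidedIdeal R, (T : Set R) = I :=
    ⟨.mk' I h0 (hadd _ · _ ·) (hneg _ ·) (hmull _ · _) (hmulr _ · _), TwoSidedIdeal.coe_mk' ..⟩
  rintro x ⟨hxI, hx⟩
  refine ⟨hxI, fun M hM hMe => ?_⟩
  by_cases hIM : (I : Set R) ⊆ M
  · exact hIM hxI
  · exact (hx _ (I.isMaxRI_inter hM hIM) (I.isEssRI_inter hM hMe)).2
end

section
/- Let R be a ring and I a maximal two-sided ideal of R that is not essential as a right ideal. Then δ(I) = I ∩ δ(R). -/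
open MulOpposite

/-- A right `R`-module `M` (a module over `Rᵐᵒᵖ`) is singular if every element has an
essential annihilator right ideal. -/
def IsSingularMod (R : Type*) [Ring R] (M : Type*) [AddCommGroup M] [Module Rᵐᵒᵖ M] : Prop :=
  ∀ m : M, IsEssRI (Set.univ : Set R) {s : R | (MulOpposite.op s) • m = 0}

/-- A submodule `N` of a right `R`-module `M` is δ-small if whenever `N + K = M` with
`M/K` singular, then `K = M`. -/
def IsDeltaSmall (R : Type*) [Ring R] {M : Type*} [AddCommGroup M] [Module Rᵐᵒᵖ M]
    (N : Submodule Rᵐᵒᵖ M) : Prop :=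
  ∀ K : Submodule Rᵐᵒᵖ M, N ⊔ K = ⊤ → IsSingularMod R (M ⧸ K) → K = ⊤

/-- The Zhou radical of a right `R`-module `M`: the sum of all δ-small submodules. -/
def deltaMod (R : Type*) [Ring R] (M : Type*) [AddCommGroup M] [Module Rᵐᵒᵖ M] :
    Submodule Rᵐᵒᵖ M :=
  sSup {N : Submodule Rᵐᵒᵖ M | IsDeltaSmall R N}

/-! Since `I` is not essential, some nonzero right ideal `K` meets `I` trivially; then
`K I ⊆ K ∩ I = 0`, so `K` lies in the left annihilator `A` of `I`, and maximality of the
two-sided ideal `I` forces `I + A = R`. Writing `1 = (1 - e) + e` with `e ∈ A` gives an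
idempotent `e` with `e I = 0`, whence `R = I ⊕ eR`.

The Zhou radical of a module is the intersection of its maximal submodules with singular
quotient, so `f (δ M) ⊆ δ M'` for every homomorphism `f`; applied to the inclusion of a direct
summand `N` and to the projection onto it, this gives `δ N = N ∩ δ M`. Finally `δ(R_R) = δ(R)`,
because `R/J` is singular exactly when `J` is essential. -/

theorem Set.ne_singleton_zero_iff {α : Type*} [Zero α] {S : Set α} (h0 : (0 : α) ∈ S) :
    S ≠ {0} ↔ ∃ x ∈ S, x ≠ 0 := by
  simp [Set.eq_singleton_iff_unique_mem, h0]

section Essential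

variable {R : Type*} [Ring R]

theorem IsEssRI.mono {I S T : Set R} (hS : IsEssRI I S) (h0 : (0 : R) ∈ S) (hST : S ⊆ T) :
    IsEssRI I T := fun K hK hK0 hT =>
  hS K hK hK0 <| Set.Subset.antisymm (hT ▸ Set.inter_subset_inter_left K hST)
    (Set.singleton_subset_iff.2 ⟨h0, hK.2.1⟩)

def IsRI.toSubmodule {K : Set R} (hK : IsRI Set.univ K) : Submodule Rᵐᵒᵖ R where
  carrier := K
  add_mem' ha hb := hK.2.2.1 _ ha _ hb
  zero_mem' := hK.2.1
  smul_mem' t a ha := hK.2.2.2.2 a ha t.unop trivial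

theorem isEssRI_univ_iff {S : Set R} (h0 : (0 : R) ∈ S) :
    IsEssRI Set.univ S ↔ ∀ K : Submodule Rᵐᵒᵖ R, K ≠ ⊥ → ∃ x ∈ K, x ∈ S ∧ x ≠ 0 := by
  constructor
  · intro hS K hK
    have hKRI : IsRI Set.univ (K : Set R) :=
      ⟨Set.subset_univ _, K.zero_mem, fun _ ha _ hb => K.add_mem ha hb, fun _ ha => K.neg_mem ha,
        fun _ ha y _ => K.smul_mem (op y) ha⟩
    have hSK := hS K hKRI ((Set.ne_singleton_zero_iff K.zero_mem).2 ((Submodule.ne_bot_iff K).1 hK))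
    obtain ⟨x, ⟨hxS, hxK⟩, hx0⟩ := (Set.ne_singleton_zero_iff (S := S ∩ K) ⟨h0, K.zero_mem⟩).1 hSK
    exact ⟨x, hxK, hxS, hx0⟩
  · intro hS K hK hK0
    obtain ⟨x, hxK, hxS, hx0⟩ := hS hK.toSubmodule <|
      (Submodule.ne_bot_iff _).2 ((Set.ne_singleton_zero_iff hK.2.1).1 hK0)
    exact (Set.ne_singleton_zero_iff (S := S ∩ K) ⟨h0, hK.2.1⟩).2 ⟨x, ⟨hxS, hxK⟩, hx0⟩

theorem isEssentialRI_iff_isEssRI (J : Submodule Rᵐᵒᵖ R) :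
    IsEssentialRI R J ↔ IsEssRI Set.univ (J : Set R) := by
  rw [isEssRI_univ_iff J.zero_mem]
  simp only [IsEssentialRI, Submodule.ne_bot_iff, Submodule.mem_inf, SetLike.mem_coe]
  exact forall_congr' fun K => imp_congr_right fun _ => exists_congr fun x => by tauto

theorem IsEssentialRI.isEssRI_setOf_mul_mem {N : Submodule Rᵐᵒᵖ R} (hN : IsEssentialRI R N)
    (r : R) : IsEssRI Set.univ {s : R | r * s ∈ N} := by
  rw [isEssRI_univ_iff (by simp)]
  intro K hK
  set rK := K.map (DistribSMul.toLinearMap Rᵐᵒᵖ R r)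
  by_cases hrK : rK = ⊥
  · obtain ⟨k, hk, hk0⟩ := (Submodule.ne_bot_iff K).1 hK
    have hrk : r * k ∈ rK := ⟨k, hk, rfl⟩
    rw [hrK, Submodule.mem_bot] at hrk
    exact ⟨k, hk, by simp [hrk], hk0⟩
  · obtain ⟨_, hy, hy0⟩ := (Submodule.ne_bot_iff _).1 (hN rK hrK)
    obtain ⟨hyN, k, hk, rfl⟩ := Submodule.mem_inf.1 hy
    exact ⟨k, hk, hyN, fun hk0 => hy0 (by simp [hk0])⟩

end Essential

section Singular

variable {R : Type*} [Ring R] {M M' : Type*} [AddCommGroup M] [Module Rᵐᵒᵖ M]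
  [AddCommGroup M'] [Module Rᵐᵒᵖ M']

theorem isSingularMod_quotient_iff (L : Submodule Rᵐᵒᵖ M) :
    IsSingularMod R (M ⧸ L) ↔ ∀ m : M, IsEssRI Set.univ {s : R | op s • m ∈ L} := by
  simp only [IsSingularMod, (Submodule.Quotient.mk_surjective L).forall,
    ← Submodule.Quotient.mk_smul, Submodule.Quotient.mk_eq_zero]

theorem isSingularMod_quotient_mono {K L : Submodule Rᵐᵒᵖ M} (hKL : K ≤ L)
    (hK : IsSingularMod R (M ⧸ K)) : IsSingularMod R (M ⧸ L) := by
  rw [isSingularMod_quotient_iff] at hK ⊢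
  exact fun m => (hK m).mono (by simp) fun _ hs => hKL hs

theorem isSingularMod_quotient_comap (f : M →ₗ[Rᵐᵒᵖ] M') {L : Submodule Rᵐᵒᵖ M'}
    (hL : IsSingularMod R (M' ⧸ L)) : IsSingularMod R (M ⧸ L.comap f) := by
  rw [isSingularMod_quotient_iff] at hL ⊢
  simpa only [Submodule.mem_comap, map_smul] using fun m => hL (f m)

theorem isSingularMod_quotient_iff_isEssentialRI (J : Submodule Rᵐᵒᵖ R) :
    IsSingularMod R (R ⧸ J) ↔ IsEssentialRI R J := by
  rw [isSingularMod_quotient_iff, isEssentialRI_iff_isEssRI]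
  refine ⟨fun h => by simpa using h 1, fun h m => ?_⟩
  simpa only [op_smul_eq_mul] using ((isEssentialRI_iff_isEssRI J).2 h).isEssRI_setOf_mul_mem m

end Singular

theorem Submodule.exists_isCoatom_le_of_span_singleton_sup_eq_top {A M : Type*} [Ring A]
    [AddCommGroup M] [Module A M] {K : Submodule A M} {x : M}
    (hx : Submodule.span A {x} ⊔ K = ⊤) (hK : K ≠ ⊤) : ∃ L, IsCoatom L ∧ K ≤ L := by
  have : Module.Finite A (M ⧸ K) := by
    refine ⟨?_⟩
    rw [← (Submodule.map_mkQ_eq_top K _).2 ((sup_comm _ _).trans hx)]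
    exact (Submodule.fg_span_singleton x).map _
  have : Nontrivial (M ⧸ K) := Submodule.Quotient.nontrivial_iff.2 hK
  obtain ⟨L, hL, -⟩ :=
    (eq_top_or_exists_le_coatom (⊥ : Submodule A (M ⧸ K))).resolve_left bot_ne_top
  refine ⟨L.comap K.mkQ, (Submodule.isCoatom_comap_iff K.mkQ_surjective).2 hL, ?_⟩
  simpa using Submodule.comap_mono (f := K.mkQ) (bot_le : ⊥ ≤ L)

section Delta

variable {R : Type*} [Ring R] {M M' : Type*} [AddCommGroup M] [Module Rᵐᵒᵖ M]
  [AddCommGroup M'] [Module Rᵐᵒᵖ M']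

theorem IsDeltaSmall.le_of_isCoatom {N L : Submodule Rᵐᵒᵖ M} (hN : IsDeltaSmall R N)
    (hL : IsCoatom L) (hLs : IsSingularMod R (M ⧸ L)) : N ≤ L := by
  by_contra hNL
  exact hL.1 (hN L (hL.2 _ (right_lt_sup.2 hNL)) hLs)

theorem isDeltaSmall_span_singleton {x : M}
    (hx : ∀ L : Submodule Rᵐᵒᵖ M, IsCoatom L → IsSingularMod R (M ⧸ L) → x ∈ L) :
    IsDeltaSmall R (Submodule.span Rᵐᵒᵖ {x}) := by
  intro K hxK hKs
  by_contra hK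
  obtain ⟨L, hL, hKL⟩ := Submodule.exists_isCoatom_le_of_span_singleton_sup_eq_top hxK hK
  have hxL := hx L hL (isSingularMod_quotient_mono hKL hKs)
  exact hL.1 (eq_top_iff.2 (hxK ▸ sup_le ((Submodule.span_singleton_le_iff_mem _ _).2 hxL) hKL))

theorem mem_deltaMod_iff {x : M} :
    x ∈ deltaMod R M ↔ ∀ L : Submodule Rᵐᵒᵖ M, IsCoatom L → IsSingularMod R (M ⧸ L) → x ∈ L :=
  ⟨fun hx _ hL hLs => sSup_le (fun _ hN => IsDeltaSmall.le_of_isCoatom hN hL hLs) hx,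
    fun hx => le_sSup (α := Submodule Rᵐᵒᵖ M) (isDeltaSmall_span_singleton hx)
      (Submodule.mem_span_singleton_self x)⟩

theorem map_deltaMod_le (f : M →ₗ[Rᵐᵒᵖ] M') : (deltaMod R M).map f ≤ deltaMod R M' := by
  rintro _ ⟨x, hx, rfl⟩
  rw [SetLike.mem_coe, mem_deltaMod_iff] at hx
  rw [mem_deltaMod_iff]
  intro J hJ hJs
  rcases Submodule.isCoatom_comap_or_eq_top f hJ with hJ' | hJ'
  · exact hx _ hJ' (isSingularMod_quotient_comap f hJs)
  · exact (hJ' ▸ Submodule.mem_top : x ∈ J.comap f)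

theorem map_subtype_deltaMod_of_isCompl {N C : Submodule Rᵐᵒᵖ M} (h : IsCompl N C) :
    (deltaMod R N).map N.subtype = N ⊓ deltaMod R M := by
  refine le_antisymm (le_inf (Submodule.map_subtype_le _ _) (map_deltaMod_le _)) ?_
  rintro x ⟨hxN, hx⟩
  have := map_deltaMod_le (N.projectionOnto C h) ⟨x, hx, rfl⟩
  rw [Submodule.projectionOnto_apply_of_mem_left h hxN] at this
  exact ⟨_, this, rfl⟩

theorem zhouRadical_eq_deltaMod : zhouRadical R = (deltaMod R R : Set R) := by
  ext x
  simp only [zhouRadical, SetLike.mem_coe, mem_deltaMod_iff,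
    isSingularMod_quotient_iff_isEssentialRI]
  rfl

end Delta

section MaximalIdeal

variable {R : Type*} [Ring R]

theorem isCompl_span_singleton_of_one_sub_mem {I : Submodule Rᵐᵒᵖ R} {e : R} (h1e : 1 - e ∈ I)
    (heI : ∀ x ∈ I, e * x = 0) : IsCompl I (Submodule.span Rᵐᵒᵖ {e}) := by
  have he : e * e = e := by simpa [mul_sub, sub_eq_zero, eq_comm] using heI _ h1e
  constructor
  · rw [Submodule.disjoint_def]
    rintro _ hxI hx
    obtain ⟨a, rfl⟩ := Submodule.mem_span_singleton.1 hx
    rw [← heI _ hxI, MulOpposite.smul_eq_mul_unop, ← mul_assoc, he]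
  · rw [codisjoint_iff, Submodule.eq_top_iff']
    intro r
    have h1 : (1 : R) ∈ I ⊔ Submodule.span Rᵐᵒᵖ {e} := by
      simpa using Submodule.add_mem_sup h1e (Submodule.mem_span_singleton_self e)
    simpa using Submodule.smul_mem _ (op r) h1

def leftAnnihilator (I : Submodule Rᵐᵒᵖ R) (hI : ∀ r : R, ∀ x ∈ I, r * x ∈ I) :
    Submodule Rᵐᵒᵖ R where
  carrier := {r | ∀ x ∈ I, r * x = 0}
  add_mem' ha hb x hx := by simp [add_mul, ha x hx, hb x hx]
  zero_mem' x _ := zero_mul x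
  smul_mem' t a ha x hx := by
    simpa [op_smul_eq_mul, mul_assoc] using ha _ (hI _ _ hx)

theorem exists_one_sub_mem_of_maximal_not_essential {I : Submodule Rᵐᵒᵖ R}
    (hleft : ∀ r : R, ∀ x ∈ I, r * x ∈ I)
    (hmax : ∀ J : Submodule Rᵐᵒᵖ R, (∀ r : R, ∀ x ∈ J, r * x ∈ J) → I < J → J = ⊤)
    (hness : ¬ IsEssentialRI R I) : ∃ e : R, 1 - e ∈ I ∧ ∀ x ∈ I, e * x = 0 := by
  set A := leftAnnihilator I hleft
  obtain ⟨K, hK, hIK⟩ : ∃ K : Submodule Rᵐᵒᵖ R, K ≠ ⊥ ∧ I ⊓ K = ⊥ := by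
    simpa [IsEssentialRI] using hness
  have hKA : K ≤ A := fun k hk x hx => by
    have : k * x ∈ I ⊓ K := ⟨hleft k x hx, K.smul_mem (op x) hk⟩
    rwa [hIK, Submodule.mem_bot] at this
  have hleftA : ∀ r : R, ∀ x ∈ I ⊔ A, r * x ∈ I ⊔ A := by
    intro r x hx
    obtain ⟨a, ha, b, hb, rfl⟩ := Submodule.mem_sup.1 hx
    rw [mul_add]
    refine Submodule.add_mem_sup (hleft r a ha) fun y hy => ?_
    rw [mul_assoc, hb y hy, mul_zero]
  have hIA : I ⊔ A = ⊤ := hmax _ hleftA <| left_lt_sup.2 fun hAI =>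
    hK (eq_bot_iff.2 (hIK ▸ le_inf (hKA.trans hAI) le_rfl))
  obtain ⟨i, hi, e, he, hie⟩ := Submodule.mem_sup.1 (hIA ▸ Submodule.mem_top : (1 : R) ∈ I ⊔ A)
  exact ⟨e, by rwa [← hie, add_sub_cancel_right], he⟩

end MaximalIdeal

theorem deltaMod_of_maximal_not_essential_general (R : Type*) [Ring R] (I : Submodule Rᵐᵒᵖ R)
    (hleft : ∀ r : R, ∀ x ∈ I, r * x ∈ I)
    (hmax : ∀ J : Submodule Rᵐᵒᵖ R, (∀ r : R, ∀ x ∈ J, r * x ∈ J) → I < J → J = ⊤)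
    (hness : ¬ IsEssentialRI R I) :
    ((Submodule.map I.subtype (deltaMod R I) : Submodule Rᵐᵒᵖ R) : Set R) =
      (I : Set R) ∩ zhouRadical R := by
  obtain ⟨e, h1e, heI⟩ := exists_one_sub_mem_of_maximal_not_essential hleft hmax hness
  rw [map_subtype_deltaMod_of_isCompl (isCompl_span_singleton_of_one_sub_mem h1e heI),
    zhouRadical_eq_deltaMod, Submodule.coe_inf]

/-- If `I` is a maximal two-sided ideal of `R` that is not essential as a right ideal,
then `δ(I) = I ∩ δ(R)`, where `δ(I)` is the Zhou radical of `I` as a right `R`-module. -/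
theorem deltaMod_of_maximal_not_essential (R : Type*) [Ring R] (I : Submodule Rᵐᵒᵖ R)
    (hleft : ∀ r : R, ∀ x ∈ I, r * x ∈ I) (hne : I ≠ ⊤)
    (hmax : ∀ J : Submodule Rᵐᵒᵖ R, (∀ r : R, ∀ x ∈ J, r * x ∈ J) → I < J → J = ⊤)
    (hness : ¬ IsEssentialRI R I) :
    ((Submodule.map I.subtype (deltaMod R I) : Submodule Rᵐᵒᵖ R) : Set R) =
      (I : Set R) ∩ zhouRadical R :=
  deltaMod_of_maximal_not_essential_general R I hleft hmax hness
end

section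
/- For R = Z and S = Z \ {0}, one has δ(Z) = 0 while δ(S⁻¹Z) = δ(Q) = Q; in particular the inclusion δ(S⁻¹R) ⊆ S⁻¹δ(R) fails. -/
open MulOpposite

/-! In a commutative ring the right ideals are just the ideals, and in a domain two nonzero
ideals always meet, since their product lies in their intersection. Hence the essential
maximal ideals of a domain are exactly its nonzero maximal ideals. A field has none, so
`δ(ℚ) = ℚ`; in `ℤ` they are the ideals `pℤ`, whose intersection is `0`. Finally `1 ∈ δ(ℚ)`,
while `s * 1 = 0` forces `s = 0`. -/

section CommRing

variable (R : Type*) [CommRing R]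

def rightIdealOrderIsoIdeal : Submodule Rᵐᵒᵖ R ≃o Ideal R where
  toFun I :=
    { I.toAddSubmonoid with
      smul_mem' := fun c x hx => by simpa [mul_comm] using I.smul_mem (op c) hx }
  invFun J :=
    { J.toAddSubmonoid with
      smul_mem' := fun c x hx => by simpa [mul_comm] using J.smul_mem c.unop hx }
  left_inv _ := rfl
  right_inv _ := rfl
  map_rel_iff' := Iff.rfl

variable {R}

@[simp]
theorem mem_rightIdealOrderIsoIdeal {I : Submodule Rᵐᵒᵖ R} {x : R} :
    x ∈ rightIdealOrderIsoIdeal R I ↔ x ∈ I :=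
  Iff.rfl

theorem isEssentialRI_iff_ideal (I : Submodule Rᵐᵒᵖ R) :
    IsEssentialRI R I ↔
      ∀ J : Ideal R, J ≠ ⊥ → rightIdealOrderIsoIdeal R I ⊓ J ≠ ⊥ := by
  let e := rightIdealOrderIsoIdeal R
  refine e.toEquiv.forall_congr fun K => ?_
  simp [e, ← map_inf]

theorem zhouRadical_eq_setOf_forall_isMaximal :
    zhouRadical R =
      {x | ∀ I : Ideal R, I.IsMaximal → (∀ J : Ideal R, J ≠ ⊥ → I ⊓ J ≠ ⊥) → x ∈ I} := by
  ext x
  refine (rightIdealOrderIsoIdeal R).toEquiv.forall_congr fun I => ?_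
  simp [Ideal.isMaximal_def, isEssentialRI_iff_ideal]

end CommRing

theorem zhouRadical_eq_setOf_forall_isMaximal_ne_bot {R : Type*} [CommRing R] [IsDomain R] :
    zhouRadical R = {x | ∀ I : Ideal R, I.IsMaximal → I ≠ ⊥ → x ∈ I} := by
  have essential_iff_ne_bot (I : Ideal R) : (∀ J : Ideal R, J ≠ ⊥ → I ⊓ J ≠ ⊥) ↔ I ≠ ⊥ :=
    ⟨fun h => by simpa using h ⊤ top_ne_bot, fun hI _ => Ideal.inf_ne_bot_of_ne_bot hI⟩
  simp only [zhouRadical_eq_setOf_forall_isMaximal, essential_iff_ne_bot]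

theorem zhouRadical_eq_univ (K : Type*) [Field K] : zhouRadical K = Set.univ := by
  refine Set.eq_univ_of_forall fun x => ?_
  rw [zhouRadical_eq_setOf_forall_isMaximal_ne_bot]
  intro I hI hI_ne_bot
  exact absurd ((Ideal.eq_bot_or_top I).resolve_left hI_ne_bot) hI.ne_top

theorem zhouRadical_int : zhouRadical ℤ = {0} := by
  refine Set.eq_singleton_iff_unique_mem.mpr ⟨fun I _ _ => I.zero_mem, fun x hx => ?_⟩
  rw [zhouRadical_eq_setOf_forall_isMaximal_ne_bot] at hx
  obtain ⟨p, hxp, hp⟩ := Nat.exists_infinite_primes (x.natAbs + 1)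
  have : Fact p.Prime := ⟨hp⟩
  have hpx : (p : ℤ) ∣ x := Ideal.mem_span_singleton.mp <|
    hx _ (Int.ideal_span_isMaximal_of_prime p) (by simpa using hp.ne_zero)
  exact Int.eq_zero_of_dvd_of_natAbs_lt_natAbs hpx (by simpa using hxp)

/-- For `R = ℤ` and `S = ℤ \ {0}`, one has `δ(ℤ) = 0` and `δ(S⁻¹ℤ) = δ(ℚ) = ℚ`;
in particular the inclusion `δ(S⁻¹R) ⊆ S⁻¹δ(R)` fails. -/
theorem zhouRadical_int_rat :
    zhouRadical ℤ = {0} ∧ zhouRadical ℚ = Set.univ ∧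
    ¬ (zhouRadical ℚ ⊆ {x : ℚ | ∃ s : ℤ, s ≠ 0 ∧ ∃ r ∈ zhouRadical ℤ, (s : ℚ) * x = (r : ℚ)}) := by
  refine ⟨zhouRadical_int, zhouRadical_eq_univ ℚ, fun h => ?_⟩
  obtain ⟨s, hs, r, hr, hsr⟩ := h (zhouRadical_eq_univ ℚ ▸ Set.mem_univ (1 : ℚ))
  rw [zhouRadical_int, Set.mem_singleton_iff] at hr
  subst hr
  exact hs (by simpa using hsr)
end

section
/- Every central semicommutative ring is Zhou e-reduced for every idempotent e: if a ∈ R is nilpotent, then ae ∈ δ(R) and ea ∈ δ(R). More precisely, in a central semicommutative ring every nilpotent element a satisfies that Ra is a nilpotent left ideal, hence Ra ⊆ J(R) ⊆ δ(R). -/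
/-!
If `a ^ n = 0`, every product `(r₁ a) ⋯ (r_{2n} a)` vanishes. Going down from `a ^ n = 0`, one
shows that `a ^ p` kills all such products of length at least `2 (n - p)`: writing a product of two
more factors as `(x a) Y (y a)`, the relation `a ^ p (a Y) = 0` makes `a ^ p x a Y` central, so it
can be moved past `y a`, which produces `y a ^ (p + 1) (x a Y) = 0`. Hence `R a` is a nil left
ideal, so `1 - r a s` is always a unit, and `r a` lies in every maximal right ideal.
-/

open MulOpposite

def IsCentralSemicommutative (R : Type*) [Ring R] : Prop :=
  ∀ a b : R, a * b = 0 → ∀ r : R, a * r * b ∈ Set.center R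

section

variable {R : Type*} [Ring R]

theorem isNilpotent_mul_comm {x y : R} : IsNilpotent (x * y) ↔ IsNilpotent (y * x) := by
  suffices ∀ x y : R, IsNilpotent (x * y) → IsNilpotent (y * x) from ⟨this x y, this y x⟩
  rintro x y ⟨n, hn⟩
  exact ⟨n + 1, by rw [pow_succ, ← mul_assoc, mul_pow_mul, hn, mul_zero, zero_mul]⟩

namespace IsCentralSemicommutative

variable (hR : IsCentralSemicommutative R)
include hR

theorem pow_mul_mul_eq_zero {a x y Y : R} {p : ℕ} (h₁ : a ^ (p + 1) * Y = 0)
    (h₂ : a ^ (p + 1) * (x * a * Y) = 0) : a ^ p * (x * a * Y * (y * a)) = 0 := by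
  have hc : a ^ p * x * (a * Y) ∈ Set.center R :=
    hR _ _ (by rw [← mul_assoc, ← pow_succ, h₁]) x
  calc a ^ p * (x * a * Y * (y * a)) = a ^ p * x * (a * Y) * (y * a) := by
        simp only [mul_assoc]
    _ = y * a * (a ^ p * x * (a * Y)) := ((Set.mem_center_iff.mp hc).comm _).eq
    _ = y * (a ^ (p + 1) * (x * a * Y)) := by rw [pow_succ']; simp only [mul_assoc]
    _ = 0 := by rw [h₂, mul_zero]

theorem pow_mul_prod_map_mul_eq_zero {a : R} {p k : ℕ} (ha : a ^ (p + k) = 0) {l : List R}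
    (hl : 2 * k ≤ l.length) : a ^ p * (l.map (· * a)).prod = 0 := by
  induction k generalizing p l with
  | zero => rw [Nat.add_zero] at ha; rw [ha, zero_mul]
  | succ k ih =>
    have ha' : a ^ (p + 1 + k) = 0 := by rwa [Nat.add_right_comm, Nat.add_assoc]
    obtain ⟨x, L, y, rfl⟩ : ∃ x L y, l = x :: L ++ [y] := by
      rcases l with _ | ⟨x, t⟩
      · simp at hl
      rcases List.eq_nil_or_concat t with rfl | ⟨L, y, rfl⟩
      · simp only [List.length_cons, List.length_nil] at hl
        omega
      exact ⟨x, L, y, by simp⟩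
    have hL : 2 * k ≤ L.length := by
      simp only [List.length_append, List.length_cons, List.length_nil] at hl
      omega
    have h₁ := ih ha' hL
    have h₂ := ih ha' (l := x :: L) (by simp only [List.length_cons]; omega)
    simp only [List.map_cons, List.prod_cons] at h₂
    simpa only [List.cons_append, List.map_cons, List.map_append, List.prod_cons, List.prod_append,
      List.map_nil, List.prod_nil, mul_one, mul_assoc] using
      hR.pow_mul_mul_eq_zero (y := y) h₁ h₂

theorem exists_prod_map_mul_eq_zero {a : R} (ha : IsNilpotent a) :
    ∃ n : ℕ, 0 < n ∧ ∀ l : List R, n ≤ l.length → (l.map (· * a)).prod = 0 := by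
  obtain ⟨n, hn⟩ := ha
  refine ⟨2 * (n + 1), by omega, fun l hl => ?_⟩
  simpa using hR.pow_mul_prod_map_mul_eq_zero (p := 0) (by rw [zero_add, pow_succ, hn, zero_mul]) hl

theorem isNilpotent_mul_left {a : R} (ha : IsNilpotent a) (r : R) : IsNilpotent (r * a) := by
  obtain ⟨n, -, hn⟩ := hR.exists_prod_map_mul_eq_zero ha
  exact ⟨n, by simpa [List.map_replicate] using hn (List.replicate n r) (by simp)⟩

end IsCentralSemicommutative

theorem Submodule.eq_top_of_isUnit_mem_op {I : Submodule Rᵐᵒᵖ R} {y : R} (hy : y ∈ I)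
    (hu : IsUnit y) : I = ⊤ := by
  obtain ⟨u, rfl⟩ := hu
  refine eq_top_iff.2 fun z _ => ?_
  simpa [← mul_assoc] using I.smul_mem (op (↑u⁻¹ * z)) hy

theorem mem_jacobson_op_of_forall_isUnit_one_sub_mul {x : R} (hx : ∀ s, IsUnit (1 - x * s)) :
    x ∈ Module.jacobson Rᵐᵒᵖ R := by
  refine Submodule.mem_sInf.2 fun I hI => ?_
  by_contra hxI
  have hsup : I ⊔ Submodule.span Rᵐᵒᵖ {x} = ⊤ :=
    hI.2 _ (left_lt_sup.2 fun hle => hxI (hle (Submodule.mem_span_singleton_self x)))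
  obtain ⟨y, hy, z, hz, hyz⟩ := Submodule.mem_sup.1 (hsup ▸ Submodule.mem_top : (1 : R) ∈ _)
  obtain ⟨c, rfl⟩ := Submodule.mem_span_singleton.1 hz
  have hy' : y = 1 - x * c.unop := eq_sub_of_add_eq hyz
  exact hI.1 (Submodule.eq_top_of_isUnit_mem_op hy (hy' ▸ hx c.unop))

theorem jacobson_op_subset_zhouRadical : (Module.jacobson Rᵐᵒᵖ R : Set R) ⊆ zhouRadical R :=
  fun _ hx I hI _ => Submodule.mem_sInf.1 hx I hI

end

/-- Every central semicommutative ring is Zhou `e`-reduced for every idempotent `e`: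
for every nilpotent `a`, the left ideal `Ra` is nilpotent, `Ra ⊆ δ(R)`, and
`a * e ∈ δ(R)` and `e * a ∈ δ(R)` for every idempotent `e`. -/
theorem central_semicommutative_zhou_reduced (R : Type*) [Ring R]
    (hcs : ∀ a b : R, a * b = 0 → ∀ r : R, a * r * b ∈ Set.center R) :
    ∀ a : R, IsNilpotent a →
      (∃ n : ℕ, 0 < n ∧ ∀ l : List R, l.length = n → (l.map (fun r => r * a)).prod = 0) ∧
      (∀ r : R, r * a ∈ zhouRadical R) ∧
      ∀ e : R, IsIdempotentElem e → a * e ∈ zhouRadical R ∧ e * a ∈ zhouRadical R := by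
  intro a ha
  have hR : IsCentralSemicommutative R := hcs
  have hJ (r : R) : r * a ∈ Module.jacobson Rᵐᵒᵖ R := by
    refine mem_jacobson_op_of_forall_isUnit_one_sub_mul fun s => ?_
    have hsra : IsNilpotent (s * (r * a)) := by
      simpa only [mul_assoc] using hR.isNilpotent_mul_left ha (s * r)
    exact (isNilpotent_mul_comm.1 hsra).isUnit_one_sub
  obtain ⟨n, hn, hprod⟩ := hR.exists_prod_map_mul_eq_zero ha
  refine ⟨⟨n, hn, fun l hl => hprod l hl.ge⟩, fun r => jacobson_op_subset_zhouRadical (hJ r),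
    fun e _ => ⟨jacobson_op_subset_zhouRadical ?_, jacobson_op_subset_zhouRadical (hJ e)⟩⟩
  simpa using (Module.jacobson Rᵐᵒᵖ R).smul_mem (op e) (hJ 1)
end

section
/- Every right e-semicommutative ring R is Zhou right e-reduced: for any nilpotent a ∈ R, ae ∈ δ(R). In fact, if a ∈ R is nilpotent of index n in a right e-semicommutative ring, then (Rae)ⁿ = 0, so Rae is a nilpotent left ideal contained in δ(R). -/
open MulOpposite

/-!
Peeling one factor `a` off `a ^ n = 0` at a time, right `e`-semicommutativity lets one insert an
arbitrary factor in its place (the idempotent `e` it appends is absorbed by the one already at the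
end), so every product `r₁ a e ⋯ rₙ a e` vanishes. In particular each `r a e` is nilpotent, hence so
is each `a e r`; then `1 - a e r` is a unit, which forces `a e` into every maximal right ideal.
-/

def IsRightESemicommutative {R : Type*} [Mul R] [Zero R] (e : R) : Prop :=
  ∀ a b : R, a * b = 0 → ∀ r : R, a * r * (b * e) = 0

theorem mul_prod_map_mul_mul {M : Type*} [Monoid M] (b c : M) (l : List M) :
    c * (l.map (· * (b * c))).prod = (l.map (fun r => c * r * b)).prod * c := by
  induction l with
  | nil => simp
  | cons r l ih => simp only [List.map_cons, List.prod_cons, mul_assoc, ih]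

theorem IsNilpotent.mul_swap {R : Type*} [MonoidWithZero R] {x y : R}
    (h : IsNilpotent (y * x)) : IsNilpotent (x * y) := by
  obtain ⟨n, hn⟩ := h
  exact ⟨n + 1, by rw [_root_.pow_succ, ← mul_assoc, mul_pow_mul, hn, mul_zero, zero_mul]⟩

namespace IsRightESemicommutative

variable {R : Type*} [MonoidWithZero R] {e : R}

theorem mul_prod_map_mul_mul_eq_zero (hsc : IsRightESemicommutative e)
    (he : IsIdempotentElem e) (a : R) :
    ∀ (s : List R) (x : R), x * a ^ s.length = 0 → x * (s.map (· * a)).prod * e = 0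
  | [], x, hx => by simp_all
  | r :: s, x, hx => by
    have hxa : x * a * (s.map (· * a)).prod * e = 0 :=
      mul_prod_map_mul_mul_eq_zero hsc he a s (x * a) (by rwa [mul_assoc, ← pow_succ'])
    have := hsc x _ (by simpa only [mul_assoc] using hxa) r
    simpa only [List.map_cons, List.prod_cons, mul_assoc, he.eq] using this

theorem prod_map_mul_mul_eq_zero (hsc : IsRightESemicommutative e) (he : IsIdempotentElem e)
    {a : R} {l : List R} (ha : a ^ l.length = 0) : (l.map (· * (a * e))).prod = 0 := by
  cases l with
  | nil => simpa using ha
  | cons r l =>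
    have h := hsc.mul_prod_map_mul_mul_eq_zero he a (r :: l.map (e * ·)) 1 (by simpa using ha)
    rw [List.map_cons, List.prod_cons, mul_assoc r, mul_assoc a, mul_prod_map_mul_mul]
    simpa [Function.comp_def, mul_assoc] using h

end IsRightESemicommutative

theorem Submodule.mem_of_isCoatom_of_forall_isNilpotent_mul {R : Type*} [Ring R]
    {I : Submodule Rᵐᵒᵖ R} (hI : IsCoatom I) {x : R} (hx : ∀ r, IsNilpotent (x * r)) :
    x ∈ I := by
  by_contra hxI
  have hsup : I ⊔ span Rᵐᵒᵖ {x} = ⊤ :=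
    hI.2 _ (left_lt_sup.mpr fun hle => hxI (hle (mem_span_singleton_self x)))
  obtain ⟨y, hy, z, hz, hyz⟩ := mem_sup.mp (hsup ▸ mem_top : (1 : R) ∈ I ⊔ span Rᵐᵒᵖ {x})
  obtain ⟨c, rfl⟩ := mem_span_singleton.mp hz
  obtain ⟨u, hu⟩ := (hx c.unop).isUnit_one_sub
  have hyu : y = u := (eq_sub_of_add_eq hyz).trans hu.symm
  have h1 : (1 : R) ∈ I := by simpa [hyu] using I.smul_mem (op (↑u⁻¹ : R)) hy
  exact hI.1 (eq_top_iff.mpr fun w _ => by simpa using I.smul_mem (op w) h1)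

theorem mem_zhouRadical_of_forall_isNilpotent_mul {R : Type*} [Ring R] {x : R}
    (hx : ∀ r, IsNilpotent (x * r)) : x ∈ zhouRadical R :=
  fun _ hI _ => Submodule.mem_of_isCoatom_of_forall_isNilpotent_mul hI hx

/-- Every right `e`-semicommutative ring is Zhou right `e`-reduced: if `a` is nilpotent
with `aⁿ = 0`, `n > 0`, then `(Rae)ⁿ = 0`, so `Rae` is a nilpotent left ideal, and
`a * e ∈ δ(R)`. -/
theorem right_e_semicommutative_zhou_right_e_reduced (R : Type*) [Ring R]
    (e : R) (he : IsIdempotentElem e)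
    (hsc : ∀ a b : R, a * b = 0 → ∀ r : R, a * r * (b * e) = 0) :
    ∀ (a : R) (n : ℕ), 0 < n → a ^ n = 0 →
      (∀ l : List R, l.length = n → (l.map (fun r => r * (a * e))).prod = 0) ∧
      a * e ∈ zhouRadical R := by
  intro a n _ ha
  have hprod : ∀ l : List R, l.length = n → (l.map (fun r => r * (a * e))).prod = 0 :=
    fun l hl => IsRightESemicommutative.prod_map_mul_mul_eq_zero hsc he (hl ▸ ha)
  refine ⟨hprod, mem_zhouRadical_of_forall_isNilpotent_mul fun r => IsNilpotent.mul_swap ⟨n, ?_⟩⟩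
  simpa using hprod (List.replicate n r) List.length_replicate
end

section
/- Every right quasi-duo ring R satisfies N(R) ⊆ δ(R): every nilpotent element of R lies in every essential maximal right ideal of R. -/
open MulOpposite

/-!
A maximal right ideal `I` that is two-sided is completely prime: if `b ∉ I` then
`1 = x + b c` with `x ∈ I`, so `y = y x + (y b) c` lies in `I` whenever `y b` does.
Hence `b ^ n ∈ I` forces `b ∈ I`, and a nilpotent `a` satisfies `a ^ n = 0 ∈ I`.
-/

namespace Submodule

variable {R : Type*} [Ring R] {I : Submodule Rᵐᵒᵖ R}

theorem exists_add_mul_eq_one_of_isCoatom (hI : IsCoatom I) {b : R} (hb : b ∉ I) :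
    ∃ x ∈ I, ∃ c : R, x + b * c = 1 := by
  have hsup : I ⊔ span Rᵐᵒᵖ {b} = ⊤ := codisjoint_iff.mp <|
    hI.not_le_iff_codisjoint.mp fun h => hb (h (mem_span_singleton_self b))
  obtain ⟨x, hx, y, hy, hxy⟩ := mem_sup.mp (hsup ▸ mem_top : (1 : R) ∈ I ⊔ span Rᵐᵒᵖ {b})
  obtain ⟨c, rfl⟩ := mem_span_singleton.mp hy
  exact ⟨x, hx, c.unop, by simpa [smul_eq_mul_unop] using hxy⟩

theorem mem_of_mul_mem_of_isCoatom (hI : IsCoatom I) (hleft : ∀ r : R, ∀ x ∈ I, r * x ∈ I)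
    {y b : R} (hyb : y * b ∈ I) (hb : b ∉ I) : y ∈ I := by
  obtain ⟨x, hx, c, hxc⟩ := exists_add_mul_eq_one_of_isCoatom hI hb
  have hy : y = y * x + y * b * c := by rw [mul_assoc, ← mul_add, hxc, mul_one]
  rw [hy]
  exact I.add_mem (hleft y x hx) (by simpa using I.smul_mem (op c) hyb)

theorem mem_of_pow_mem_of_isCoatom (hI : IsCoatom I) (hleft : ∀ r : R, ∀ x ∈ I, r * x ∈ I)
    {b : R} {n : ℕ} (hbn : b ^ n ∈ I) : b ∈ I := by
  induction n with
  | zero =>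
    rw [pow_zero] at hbn
    simpa using I.smul_mem (op b) hbn
  | succ k ih =>
    by_contra hb
    exact hb (ih (mem_of_mul_mem_of_isCoatom hI hleft (pow_succ b k ▸ hbn) hb))

end Submodule

/-- Every right quasi-duo ring `R` (every maximal right ideal is two-sided) satisfies
`N(R) ⊆ δ(R)`: every nilpotent element lies in the Zhou radical. -/
theorem right_quasiDuo_nilpotents_in_zhouRadical (R : Type*) [Ring R]
    (hrqd : ∀ I : Submodule Rᵐᵒᵖ R, IsCoatom I → ∀ r : R, ∀ x ∈ I, r * x ∈ I) :
    ∀ a : R, IsNilpotent a → a ∈ zhouRadical R := by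
  rintro a ⟨n, hn⟩ I hI -
  exact Submodule.mem_of_pow_mem_of_isCoatom hI (hrqd I hI) (hn ▸ I.zero_mem)
end

section
/- Let R be a ring and S = {(r,s) ∈ R × R : r − s ∈ δ(R)}, a subring of R × R. Then δ(S) = {(r,s) ∈ δ(R) × δ(R) : r − s ∈ δ(R)} = δ(R) × δ(R). -/
open MulOpposite

/-!
Write `S` for the pullback of a two-sided ideal `I ⊇ δ(R)`. Right ideals of `S` containing
`0 × I` are exactly the lifts `{(r, s) ∈ S : r ∈ M}` of right ideals `M` of `R`, and lifting
preserves and reflects maximality and essentiality. Lifts of essential maximal right ideals give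
`δ(S) ⊆ δ(R) × δ(R)`, the second coordinate by the symmetry `(r, s) ↦ (s, r)` of `S`.
Conversely `0 × I` and `I × 0` annihilate each other, so a maximal right ideal of `S` contains one
of them; up to the symmetry, an essential maximal one is then the lift of an essential maximal
right ideal of `R`, which contains `δ(R)`.
-/

open Pointwise

section ZhouRadical

variable {R : Type*} [Ring R]

lemma IsEssentialRI.comap {M : Submodule Rᵐᵒᵖ R} (hM : IsEssentialRI R M) (f : R →ₗ[Rᵐᵒᵖ] R) :
    IsEssentialRI R (M.comap f) := by
  intro K hK
  obtain ⟨k, hk, hk0⟩ := (Submodule.ne_bot_iff K).1 hK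
  rw [Submodule.ne_bot_iff]
  by_cases hfk : f k = 0
  · exact ⟨k, ⟨by simp [hfk], hk⟩, hk0⟩
  · have hfK : K.map f ≠ ⊥ := (Submodule.ne_bot_iff _).2 ⟨f k, ⟨k, hk, rfl⟩, hfk⟩
    obtain ⟨_, ⟨hyM, k', hk', rfl⟩, hy0⟩ := (Submodule.ne_bot_iff _).1 (hM _ hfK)
    exact ⟨k', ⟨hyM, hk'⟩, fun h => hy0 (by rw [h, map_zero])⟩

lemma mul_mem_zhouRadical_left (a : R) {x : R} (hx : x ∈ zhouRadical R) :
    a * x ∈ zhouRadical R := by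
  intro M hM hMess
  let f : R →ₗ[Rᵐᵒᵖ] R := DistribSMul.toLinearMap Rᵐᵒᵖ R a
  rcases Submodule.isCoatom_comap_or_eq_top f hM with hcoatom | htop
  · exact hx _ hcoatom (hMess.comap f)
  · exact (htop ▸ Submodule.mem_top : x ∈ M.comap f)

variable (R) in
def zhouIdeal : TwoSidedIdeal R :=
  .mk' (zhouRadical R) (fun M _ _ => M.zero_mem)
    (fun hx hy M hM hMess => M.add_mem (hx M hM hMess) (hy M hM hMess))
    (fun hx M hM hMess => M.neg_mem (hx M hM hMess))
    (mul_mem_zhouRadical_left _)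
    (fun hx M hM hMess => M.smul_mem (op _) (hx M hM hMess))

@[simp]
lemma mem_zhouIdeal {x : R} : x ∈ zhouIdeal R ↔ x ∈ zhouRadical R :=
  TwoSidedIdeal.mem_mk' ..

end ZhouRadical

lemma Set.ne_singleton_iff_exists_ne {α : Type*} {s : Set α} {a : α} (ha : a ∈ s) :
    s ≠ {a} ↔ ∃ x ∈ s, x ≠ a := by
  simp [Set.eq_singleton_iff_unique_mem, ha]

section RightIdealsOfSubring

variable {A : Type*} [Ring A] {S : Subring A} {J K L : Set A}

namespace IsRI

lemma subset (hJ : IsRI S J) : J ⊆ S := hJ.1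

lemma zero_mem (hJ : IsRI S J) : (0 : A) ∈ J := hJ.2.1

lemma add_mem (hJ : IsRI S J) {a b : A} (ha : a ∈ J) (hb : b ∈ J) : a + b ∈ J :=
  hJ.2.2.1 a ha b hb

lemma neg_mem (hJ : IsRI S J) {a : A} (ha : a ∈ J) : -a ∈ J := hJ.2.2.2.1 a ha

lemma sub_mem (hJ : IsRI S J) {a b : A} (ha : a ∈ J) (hb : b ∈ J) : a - b ∈ J :=
  sub_eq_add_neg a b ▸ hJ.add_mem ha (hJ.neg_mem hb)

lemma mul_mem (hJ : IsRI S J) {a y : A} (ha : a ∈ J) (hy : y ∈ S) : a * y ∈ J :=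
  hJ.2.2.2.2 a ha y hy

lemma add (hJ : IsRI S J) (hL : IsRI S L) : IsRI S (J + L) := by
  refine ⟨?_, ⟨0, hJ.zero_mem, 0, hL.zero_mem, add_zero 0⟩, ?_, ?_, ?_⟩
  · rintro _ ⟨a, ha, b, hb, rfl⟩
    exact S.add_mem (hJ.subset ha) (hL.subset hb)
  · rintro _ ⟨a, ha, b, hb, rfl⟩ _ ⟨a', ha', b', hb', rfl⟩
    exact ⟨a + a', hJ.add_mem ha ha', b + b', hL.add_mem hb hb', add_add_add_comm ..⟩
  · rintro _ ⟨a, ha, b, hb, rfl⟩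
    exact ⟨-a, hJ.neg_mem ha, -b, hL.neg_mem hb, (neg_add a b).symm⟩
  · rintro _ ⟨a, ha, b, hb, rfl⟩ y hy
    exact ⟨a * y, hJ.mul_mem ha hy, b * y, hL.mul_mem hb hy, (add_mul a b y).symm⟩

end IsRI

lemma isEssRI_iff (hJ : (0 : A) ∈ J) :
    IsEssRI S J ↔ ∀ L, IsRI S L → ∀ x ∈ L, x ≠ 0 → ∃ y ∈ J ∩ L, y ≠ 0 := by
  refine forall₂_congr fun L hL => ?_
  rw [Set.ne_singleton_iff_exists_ne hL.zero_mem,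
    Set.ne_singleton_iff_exists_ne (Set.mem_inter hJ hL.zero_mem)]
  simp only [forall_exists_index, and_imp]

/-- If `K ⊄ J` then `J + K = S` contains `1 = j + k`, and each `b ∈ L` is
`j * b + k * b = j * b`. -/
lemma IsMaxRI.subset_or_subset_of_mul_eq_zero (hJ : IsMaxRI S J) (hK : IsRI S K)
    (hL : IsRI S L) (hKL : ∀ a ∈ K, ∀ b ∈ L, a * b = 0) : K ⊆ J ∨ L ⊆ J := by
  refine or_iff_not_imp_left.2 fun hKJ b hb => ?_
  obtain ⟨hJ, -, hmax⟩ := hJ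
  have hsum : J + K = S := by
    refine (hmax _ (hJ.add hK) (Set.subset_add_left J hK.zero_mem)).resolve_left fun h => hKJ ?_
    exact h ▸ Set.subset_add_right K hJ.zero_mem
  obtain ⟨j, hj, k, hk, hjk⟩ := Set.mem_add.1 (hsum ▸ one_mem S : (1 : A) ∈ J + K)
  have hb' : b = j * b := by rw [← add_zero (j * b), ← hKL k hk b hb, ← add_mul, hjk, one_mul]
  exact hb' ▸ hJ.mul_mem hj (hL.subset hb)

section Automorphism

variable (σ : A ≃+* A)

lemma IsRI.preimage (hσ : ∀ x, σ x ∈ S ↔ x ∈ S) (hJ : IsRI S J) : IsRI S (σ ⁻¹' J) :=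
  ⟨fun x hx => (hσ x).1 (hJ.subset hx), by simpa using hJ.zero_mem,
    fun a ha b hb => by simpa using hJ.add_mem ha hb, fun a ha => by simpa using hJ.neg_mem ha,
    fun a ha y hy => by simpa using hJ.mul_mem ha ((hσ y).2 hy)⟩

lemma RingEquiv.symm_mem_iff_of_mem_iff (hσ : ∀ x, σ x ∈ S ↔ x ∈ S) (x : A) :
    σ.symm x ∈ S ↔ x ∈ S := by
  rw [← hσ, σ.apply_symm_apply]

lemma IsMaxRI.preimage (hσ : ∀ x, σ x ∈ S ↔ x ∈ S) (hJ : IsMaxRI S J) :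
    IsMaxRI S (σ ⁻¹' J) := by
  obtain ⟨hJ, hne, hmax⟩ := hJ
  have hσS : σ ⁻¹' (S : Set A) = S := Set.ext hσ
  have hσS' : σ.symm ⁻¹' (S : Set A) = S := Set.ext (σ.symm_mem_iff_of_mem_iff hσ)
  have symm_preimage : ∀ X : Set A, σ.symm ⁻¹' (σ ⁻¹' X) = X := fun X => by ext; simp
  have preimage_symm : ∀ X : Set A, σ ⁻¹' (σ.symm ⁻¹' X) = X := fun X => by ext; simp
  refine ⟨hJ.preimage σ hσ, fun h => hne ?_, fun K hK hJK => ?_⟩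
  · rw [← symm_preimage J, h, hσS']
  · rcases hmax _ (hK.preimage σ.symm (σ.symm_mem_iff_of_mem_iff hσ))
        (symm_preimage J ▸ Set.preimage_mono hJK) with h | h
    · exact .inl (by rw [← h, preimage_symm])
    · exact .inr (by rw [← preimage_symm K, h, hσS])

lemma IsEssRI.preimage (hσ : ∀ x, σ x ∈ S ↔ x ∈ S) (hJ0 : (0 : A) ∈ J) (hJ : IsEssRI S J) :
    IsEssRI S (σ ⁻¹' J) := by
  rw [isEssRI_iff hJ0] at hJ
  rw [isEssRI_iff (by simpa using hJ0)]
  intro L hL x hx hx0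
  obtain ⟨y, ⟨hyJ, hyL⟩, hy0⟩ :=
    hJ _ (hL.preimage σ.symm (σ.symm_mem_iff_of_mem_iff hσ)) (σ x) (by simpa using hx)
      (by simpa using hx0)
  exact ⟨σ.symm y, ⟨by simpa using hyJ, hyL⟩, by simpa using hy0⟩

lemma map_mem_zhouSet (hσ : ∀ x, σ x ∈ S ↔ x ∈ S) {x : A} (hx : x ∈ zhouSet (S : Set A)) :
    σ x ∈ zhouSet (S : Set A) :=
  ⟨(hσ x).2 hx.1, fun _ hJ hJess =>
    hx.2 _ (hJ.preimage σ hσ) (hJess.preimage σ hσ hJ.1.zero_mem)⟩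

end Automorphism

end RightIdealsOfSubring

section Pullback

variable {R : Type*} [Ring R] (I : TwoSidedIdeal R)

/-- The subring `{(r, s) : r - s ∈ I}` of `R × R`, i.e. the graph of the congruence modulo `I`. -/
def pullbackSubring : Subring (R × R) where
  carrier := {p | I.ringCon p.1 p.2}
  mul_mem' := I.ringCon.mul
  one_mem' := I.ringCon.refl 1
  add_mem' := I.ringCon.add
  zero_mem' := I.ringCon.refl 0
  neg_mem' := I.ringCon.neg

variable {I}

lemma mem_pullbackSubring {p : R × R} : p ∈ pullbackSubring I ↔ p.1 - p.2 ∈ I :=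
  I.rel_iff _ _

lemma diag_mem_pullbackSubring (r : R) : (r, r) ∈ pullbackSubring I :=
  I.ringCon.refl r

lemma prodComm_mem_pullbackSubring (p : R × R) :
    RingEquiv.prodComm p ∈ pullbackSubring I ↔ p ∈ pullbackSubring I :=
  ⟨I.ringCon.symm, I.ringCon.symm⟩

lemma isRI_inter_prod (S : Subring (R × R)) (M N : Submodule Rᵐᵒᵖ R) :
    IsRI (S : Set (R × R)) (S ∩ (M : Set R) ×ˢ (N : Set R)) := by
  refine ⟨Set.inter_subset_left, ⟨zero_mem S, M.zero_mem, N.zero_mem⟩, ?_, ?_, ?_⟩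
  · rintro a ⟨ha, ha₁, ha₂⟩ b ⟨hb, hb₁, hb₂⟩
    exact ⟨add_mem ha hb, M.add_mem ha₁ hb₁, N.add_mem ha₂ hb₂⟩
  · rintro a ⟨ha, ha₁, ha₂⟩
    exact ⟨neg_mem ha, M.neg_mem ha₁, N.neg_mem ha₂⟩
  · rintro a ⟨ha, ha₁, ha₂⟩ y hy
    exact ⟨mul_mem ha hy, M.smul_mem (op y.1) ha₁, N.smul_mem (op y.2) ha₂⟩

variable (I) in
def fstLift (M : Submodule Rᵐᵒᵖ R) : Set (R × R) :=
  (pullbackSubring I : Set (R × R)) ∩ (M : Set R) ×ˢ ((⊤ : Submodule Rᵐᵒᵖ R) : Set R)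

variable {M N : Submodule Rᵐᵒᵖ R} {J K : Set (R × R)}

@[simp]
lemma mem_fstLift {p : R × R} : p ∈ fstLift I M ↔ p.1 - p.2 ∈ I ∧ p.1 ∈ M := by
  simp [fstLift, mem_pullbackSubring]

lemma isRI_fstLift (M : Submodule Rᵐᵒᵖ R) : IsRI (pullbackSubring I : Set (R × R)) (fstLift I M) :=
  isRI_inter_prod _ M ⊤

lemma fstLift_subset_fstLift_iff : fstLift I M ⊆ fstLift I N ↔ M ≤ N := by
  refine ⟨fun h r hr => ?_, fun h p hp => ?_⟩
  · simpa using h (mem_fstLift.2 ⟨by simp, hr⟩ : (r, r) ∈ fstLift I M)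
  · exact mem_fstLift.2 ⟨(mem_fstLift.1 hp).1, h (mem_fstLift.1 hp).2⟩

lemma fstLift_injective : Function.Injective (fstLift I) := fun _ _ h =>
  le_antisymm (fstLift_subset_fstLift_iff.1 h.le) (fstLift_subset_fstLift_iff.1 h.ge)

lemma fstLift_top : fstLift I ⊤ = pullbackSubring I := by
  ext p
  simp [mem_pullbackSubring]

/-- A right ideal `K` of `S` containing `0 × I` is determined by its diagonal, since
`(r, r) - (r, s) = (0, r - s)`. -/
lemma exists_eq_fstLift (hK : IsRI (pullbackSubring I : Set (R × R)) K)
    (hbot : fstLift I ⊥ ⊆ K) : ∃ M, K = fstLift I M := by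
  have hdiag : ∀ p ∈ pullbackSubring I, (p.1, p.1) - p ∈ fstLift I ⊥ := fun p hp => by
    simpa using neg_mem (mem_pullbackSubring.1 hp)
  refine ⟨{ carrier := {r | (r, r) ∈ K}
            add_mem' := hK.add_mem
            zero_mem' := hK.zero_mem
            smul_mem' := fun t r hr =>
              (hK.mul_mem hr (diag_mem_pullbackSubring t.unop) : (r, r) * (t.unop, t.unop) ∈ K) },
    Set.ext fun p => ⟨fun hp => ?_, fun hp => ?_⟩⟩
  · have hpS := hK.subset hp
    refine mem_fstLift.2 ⟨mem_pullbackSubring.1 hpS, ?_⟩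
    simpa using hK.add_mem hp (hbot (hdiag p hpS))
  · have hpS : p ∈ pullbackSubring I := mem_pullbackSubring.2 (mem_fstLift.1 hp).1
    simpa using hK.sub_mem (mem_fstLift.1 hp).2 (hbot (hdiag p hpS))

lemma isMaxRI_fstLift_iff :
    IsMaxRI (pullbackSubring I : Set (R × R)) (fstLift I M) ↔ IsCoatom M := by
  constructor
  · rintro ⟨-, hne, hmax⟩
    refine ⟨fun h => hne (by rw [h, fstLift_top]), fun N hMN => ?_⟩
    rcases hmax _ (isRI_fstLift N) (fstLift_subset_fstLift_iff.2 hMN.le) with h | h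
    · exact absurd (fstLift_injective h).le hMN.not_ge
    · exact fstLift_injective (h.trans fstLift_top.symm)
  · intro hM
    refine ⟨isRI_fstLift M, fun h => hM.1 (fstLift_injective (h.trans fstLift_top.symm)),
      fun K hK hMK => ?_⟩
    obtain ⟨N, rfl⟩ := exists_eq_fstLift hK ((fstLift_subset_fstLift_iff.2 bot_le).trans hMK)
    rcases hM.le_iff.1 (fstLift_subset_fstLift_iff.1 hMK) with rfl | rfl
    · exact .inr fstLift_top
    · exact .inl rfl

lemma isEssRI_fstLift (hM : IsEssentialRI R M) :
    IsEssRI (pullbackSubring I : Set (R × R)) (fstLift I M) := by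
  rw [isEssRI_iff (isRI_fstLift M).zero_mem]
  intro L hL p hp hp0
  have hpS := mem_pullbackSubring.1 (hL.subset hp)
  by_cases hp₁ : p.1 = 0
  · exact ⟨p, ⟨mem_fstLift.2 ⟨hpS, hp₁ ▸ M.zero_mem⟩, hp⟩, hp0⟩
  obtain ⟨_, ⟨hxM, hx⟩, hx0⟩ := (Submodule.ne_bot_iff _).1
    (hM _ (Submodule.span_singleton_eq_bot.not.2 hp₁))
  obtain ⟨t, rfl⟩ := Submodule.mem_span_singleton.1 hx
  have hpt : p * (t.unop, t.unop) ∈ L := hL.mul_mem hp (diag_mem_pullbackSubring t.unop)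
  exact ⟨_, ⟨mem_fstLift.2 ⟨mem_pullbackSubring.1 (hL.subset hpt), hxM⟩, hpt⟩,
    fun h => hx0 (congrArg Prod.fst h)⟩

/-- Test `M` against a right ideal `K` of `R` through the right ideal `S ∩ (K × K)` of `S`, or,
when `K` meets `I`, through `S ∩ (K × 0)`; in both, nonzero elements have nonzero first
coordinate. -/
lemma isEssentialRI_of_isEssRI_fstLift
    (h : IsEssRI (pullbackSubring I : Set (R × R)) (fstLift I M)) : IsEssentialRI R M := by
  rw [isEssRI_iff (isRI_fstLift M).zero_mem] at h
  intro K hK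
  obtain ⟨k, hk, hk0⟩ := (Submodule.ne_bot_iff K).1 hK
  rw [Submodule.ne_bot_iff]
  have test : ∀ N : Submodule Rᵐᵒᵖ R,
      (∀ p ∈ (pullbackSubring I : Set (R × R)) ∩ (K : Set R) ×ˢ (N : Set R), p.1 = 0 → p = 0) →
      ∀ q ∈ (pullbackSubring I : Set (R × R)) ∩ (K : Set R) ×ˢ (N : Set R), q ≠ 0 →
      ∃ x ∈ M ⊓ K, x ≠ 0 := by
    intro N hN q hq hq0
    obtain ⟨p, ⟨hpM, hpL⟩, hp0⟩ := h _ (isRI_inter_prod _ K N) q hq hq0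
    exact ⟨p.1, ⟨(mem_fstLift.1 hpM).2, hpL.2.1⟩, fun hp₁ => hp0 (hN p hpL hp₁)⟩
  by_cases hKI : ∃ x ∈ K, x ∈ I ∧ x ≠ 0
  · obtain ⟨x, hxK, hxI, hx0⟩ := hKI
    refine test ⊥ (fun p hp hp₁ => Prod.ext hp₁ hp.2.2) (x, 0)
      ⟨mem_pullbackSubring.2 (by simpa using hxI), hxK, rfl⟩ (by simpa using hx0)
  · push Not at hKI
    refine test K (fun p hp hp₁ => Prod.ext hp₁ (hKI p.2 hp.2.2 ?_))
      (k, k) ⟨diag_mem_pullbackSubring k, hk, hk⟩ (by simpa using hk0)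
    simpa [hp₁] using mem_pullbackSubring.1 hp.1

lemma isEssRI_fstLift_iff :
    IsEssRI (pullbackSubring I : Set (R × R)) (fstLift I M) ↔ IsEssentialRI R M :=
  ⟨isEssentialRI_of_isEssRI_fstLift, isEssRI_fstLift⟩

/-- `0 × I = fstLift I ⊥` and `I × 0` annihilate each other, so a maximal right ideal of `S`
contains one of them. -/
lemma IsMaxRI.fstLift_bot_subset (hJ : IsMaxRI (pullbackSubring I : Set (R × R)) J) :
    fstLift I ⊥ ⊆ J ∨ fstLift I ⊥ ⊆ RingEquiv.prodComm ⁻¹' J := by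
  refine (hJ.subset_or_subset_of_mul_eq_zero (isRI_fstLift ⊥) (isRI_inter_prod _ ⊤ ⊥) ?_).imp_right
    fun h p hp => h ⟨(prodComm_mem_pullbackSubring p).2
      (mem_pullbackSubring.2 (mem_fstLift.1 hp).1), trivial, (mem_fstLift.1 hp).2⟩
  rintro a ha b ⟨-, -, hb₂⟩
  have ha₁ : a.1 = 0 := (mem_fstLift.1 ha).2
  have hb₂ : b.2 = 0 := hb₂
  exact Prod.ext (by simp [ha₁]) (by simp [hb₂])

end Pullback

section ZhouRadicalOfPullback

variable {R : Type*} [Ring R] {I : TwoSidedIdeal R}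

lemma fst_mem_zhouRadical {p : R × R} (hp : p ∈ zhouSet (pullbackSubring I : Set (R × R))) :
    p.1 ∈ zhouRadical R := fun _ hM hMess =>
  (mem_fstLift.1 (hp.2 _ (isMaxRI_fstLift_iff.2 hM) (isEssRI_fstLift hMess))).2

lemma mem_zhouSet_pullbackSubring (hI : zhouIdeal R ≤ I) {p : R × R}
    (h₁ : p.1 ∈ zhouRadical R) (h₂ : p.2 ∈ zhouRadical R) :
    p ∈ zhouSet (pullbackSubring I : Set (R × R)) := by
  have hsub : ∀ q : R × R, q.1 ∈ zhouRadical R → q.2 ∈ zhouRadical R → q.1 - q.2 ∈ I :=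
    fun q h₁ h₂ => hI (sub_mem (mem_zhouIdeal.2 h₁) (mem_zhouIdeal.2 h₂))
  have mem_of_fstLift_bot_subset : ∀ J, IsMaxRI (pullbackSubring I : Set (R × R)) J →
      IsEssRI (pullbackSubring I : Set (R × R)) J → fstLift I ⊥ ⊆ J →
      ∀ q : R × R, q.1 ∈ zhouRadical R → q.2 ∈ zhouRadical R → q ∈ J := by
    intro J hJ hJess hbot q h₁ h₂
    obtain ⟨M, rfl⟩ := exists_eq_fstLift hJ.1 hbot
    exact mem_fstLift.2
      ⟨hsub q h₁ h₂, h₁ M (isMaxRI_fstLift_iff.1 hJ) (isEssRI_fstLift_iff.1 hJess)⟩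
  refine ⟨mem_pullbackSubring.2 (hsub p h₁ h₂), fun J hJ hJess => ?_⟩
  rcases hJ.fstLift_bot_subset with hbot | hbot
  · exact mem_of_fstLift_bot_subset J hJ hJess hbot p h₁ h₂
  · simpa using mem_of_fstLift_bot_subset _ (hJ.preimage _ prodComm_mem_pullbackSubring)
      (hJess.preimage _ prodComm_mem_pullbackSubring hJ.1.zero_mem) hbot p.swap h₂ h₁

theorem zhouSet_pullbackSubring (hI : zhouIdeal R ≤ I) :
    zhouSet (pullbackSubring I : Set (R × R)) = zhouRadical R ×ˢ zhouRadical R :=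
  Set.ext fun p => ⟨fun hp => ⟨fst_mem_zhouRadical hp, by
    simpa using fst_mem_zhouRadical (map_mem_zhouSet _ prodComm_mem_pullbackSubring hp)⟩,
    fun ⟨h₁, h₂⟩ => mem_zhouSet_pullbackSubring hI h₁ h₂⟩

end ZhouRadicalOfPullback

/-- For the subring `S = {(r, s) ∈ R × R : r − s ∈ δ(R)}` of `R × R`,
`δ(S) = {(r, s) ∈ δ(R) × δ(R) : r − s ∈ δ(R)} = δ(R) × δ(R)`. -/
theorem zhou_of_pullback (R : Type*) [Ring R] :
    zhouSet {p : R × R | p.1 - p.2 ∈ zhouRadical R} =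
      {p : R × R | p.1 ∈ zhouRadical R ∧ p.2 ∈ zhouRadical R ∧
        p.1 - p.2 ∈ zhouRadical R} ∧
    zhouSet {p : R × R | p.1 - p.2 ∈ zhouRadical R} =
      (zhouRadical R) ×ˢ (zhouRadical R) := by
  have hS : {p : R × R | p.1 - p.2 ∈ zhouRadical R} = pullbackSubring (zhouIdeal R) := by
    ext p
    simp [mem_pullbackSubring]
  have hδ : zhouSet {p : R × R | p.1 - p.2 ∈ zhouRadical R} = zhouRadical R ×ˢ zhouRadical R := by
    rw [hS]
    exact zhouSet_pullbackSubring le_rfl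
  refine ⟨hδ.trans (Set.ext fun p => ⟨fun ⟨h₁, h₂⟩ => ⟨h₁, h₂, ?_⟩, fun h => ⟨h.1, h.2.1⟩⟩), hδ⟩
  exact mem_zhouIdeal.1 (sub_mem (mem_zhouIdeal.2 h₁) (mem_zhouIdeal.2 h₂))
end

section
/- Let R be Zhou right e-reduced and I a nil ideal of R. Then R/I is Zhou right (e+I)-reduced: for any a ∈ R with a + I nilpotent in R/I, (a+I)(e+I) ∈ δ(R/I). -/
open MulOpposite

/-!
Nilpotency lifts along `R → R/I` because `I` is nil: if `aⁿ ∈ I` then `aⁿ` is nilpotent, hence so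
is `a`. So `a e ∈ δ(R)`, and the Zhou radical is carried into the Zhou radical by any surjective
ring homomorphism `f`: pulling back along `f` sends maximal right ideals to maximal right ideals
and essential right ideals to essential ones (a right ideal `K` of `R` either meets `ker f`, which
lies in every pullback, or maps to a nonzero right ideal of the target).
-/

theorem IsNilpotent.of_map_of_ker_isNilpotent {F R S : Type*} [MonoidWithZero R]
    [MonoidWithZero S] [FunLike F R S] [MonoidWithZeroHomClass F R S] {f : F}
    (hker : ∀ x, f x = 0 → IsNilpotent x) {a : R} (ha : IsNilpotent (f a)) : IsNilpotent a := by
  obtain ⟨n, hn⟩ := ha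
  obtain ⟨m, hm⟩ := hker (a ^ n) (by rw [map_pow, hn])
  exact ⟨n * m, by rw [pow_mul, hm]⟩

namespace RingHom

variable {R S : Type*} [Ring R] [Ring S]

/-- A ring homomorphism as a map of right modules, so that right ideals can be pulled back. -/
def toOpSemilinearMap (f : R →+* S) : R →ₛₗ[f.op] S where
  toFun := f
  map_add' := map_add f
  map_smul' r x := by simp [MulOpposite.smul_eq_mul_unop]

variable {f : R →+* S} (hf : Function.Surjective f)
include hf

theorem ringHomSurjective_op : RingHomSurjective f.op :=
  ⟨fun y ↦ let ⟨x, hx⟩ := hf y.unop; ⟨MulOpposite.op x, congrArg MulOpposite.op hx⟩⟩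

theorem isCoatom_comap_toOpSemilinearMap_iff {J : Submodule Sᵐᵒᵖ S} :
    IsCoatom (J.comap f.toOpSemilinearMap) ↔ IsCoatom J :=
  haveI := ringHomSurjective_op hf
  Submodule.isCoatom_comap_iff hf

theorem isEssentialRI_comap_toOpSemilinearMap {J : Submodule Sᵐᵒᵖ S}
    (hJ : IsEssentialRI S J) : IsEssentialRI R (J.comap f.toOpSemilinearMap) := by
  have := ringHomSurjective_op hf
  set g := f.toOpSemilinearMap
  intro K hK hJK
  have hker : LinearMap.ker g ⊓ K = ⊥ :=
    eq_bot_iff.mpr <| hJK ▸ inf_le_inf_right K (LinearMap.ker_le_comap g)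
  have hmap : J ⊓ K.map g = ⊥ := by
    rw [inf_comm, Submodule.map_inf_eq_map_inf_comap, inf_comm, hJK, Submodule.map_bot]
  have hKker : K ≤ LinearMap.ker g := by
    rw [LinearMap.le_ker_iff_map]
    exact not_not.mp fun h ↦ hJ _ h hmap
  exact hK (by rwa [inf_eq_right.mpr hKker] at hker)

theorem map_mem_zhouRadical {x : R} (hx : x ∈ zhouRadical R) : f x ∈ zhouRadical S :=
  fun _ hJ hJess ↦ hx _ ((isCoatom_comap_toOpSemilinearMap_iff hf).mpr hJ)
    (isEssentialRI_comap_toOpSemilinearMap hf hJess)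

end RingHom

theorem quotient_by_nil_zhou_right_reduced_general (R : Type*) [Ring R]
    (e : R)
    (hred : ∀ a : R, IsNilpotent a → a * e ∈ zhouRadical R)
    (I : TwoSidedIdeal R) (hnil : ∀ x ∈ I, IsNilpotent x) :
    ∀ a : R, IsNilpotent (I.ringCon.mk' a) →
      I.ringCon.mk' a * I.ringCon.mk' e ∈ zhouRadical I.ringCon.Quotient := by
  intro a ha
  have hker : ∀ x, I.ringCon.mk' x = 0 → IsNilpotent x := fun x hx ↦
    hnil x (I.ker_ringCon_mk' ▸ (TwoSidedIdeal.mem_ker _).mpr hx)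
  rw [← map_mul]
  exact RingHom.map_mem_zhouRadical Quotient.mk''_surjective
    (hred a (IsNilpotent.of_map_of_ker_isNilpotent hker ha))

/-- If `R` is Zhou right `e`-reduced and `I` is a nil (two-sided) ideal of `R`,
then `R/I` is Zhou right `(e + I)`-reduced: whenever `a + I` is nilpotent in `R/I`,
`(a + I)(e + I) ∈ δ(R/I)`. -/
theorem quotient_by_nil_zhou_right_reduced (R : Type*) [Ring R]
    (e : R) (he : IsIdempotentElem e)
    (hred : ∀ a : R, IsNilpotent a → a * e ∈ zhouRadical R)
    (I : TwoSidedIdeal R) (hnil : ∀ x ∈ I, IsNilpotent x) :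
    ∀ a : R, IsNilpotent (I.ringCon.mk' a) →
      I.ringCon.mk' a * I.ringCon.mk' e ∈ zhouRadical I.ringCon.Quotient :=
  quotient_by_nil_zhou_right_reduced_general R e hred I hnil
end

section
/- Let R₁,…,Rₙ be rings with idempotents eᵢ ∈ Rᵢ, R = R₁ × ⋯ × Rₙ and e = (e₁,…,eₙ). Then each Rᵢ is Zhou right eᵢ-reduced if and only if R is Zhou right e-reduced. -/
open MulOpposite

/-!
Right ideals of a finite product `∏ Rᵢ` are exactly the products `∏ Iᵢ` of right ideals of the
factors, and this identification is an isomorphism of lattices. Maximality and essentiality are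
lattice-theoretic notions, and in a product of lattices the essential coatoms are the elements
with one essential-coatom component and `⊤` everywhere else. Hence `δ(∏ Rᵢ) = ∏ δ(Rᵢ)`, and the
theorem follows because nilpotency and right multiplication by `e` are computed componentwise.
-/

section Essential

variable {α β : Type*}

def IsEssential [SemilatticeInf α] [OrderBot α] (a : α) : Prop :=
  ∀ b, b ≠ ⊥ → a ⊓ b ≠ ⊥

theorem isEssential_top [SemilatticeInf α] [OrderBot α] [OrderTop α] : IsEssential (⊤ : α) :=
  fun b hb => by rwa [top_inf_eq]

theorem OrderIso.isEssential_iff [SemilatticeInf α] [OrderBot α] [SemilatticeInf β] [OrderBot β]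
    (φ : α ≃o β) {a : α} : IsEssential (φ a) ↔ IsEssential a := by
  simp only [IsEssential, φ.surjective.forall, ← φ.map_inf, ne_eq, map_eq_bot_iff]

theorem Pi.isEssential_iff {ι : Type*} {α : ι → Type*} [∀ i, SemilatticeInf (α i)]
    [∀ i, OrderBot (α i)] {f : ∀ i, α i} : IsEssential f ↔ ∀ i, IsEssential (f i) := by
  classical
  constructor
  · intro hf i b hb hfb
    have hinf : f ⊓ Function.update ⊥ i b = Function.update ⊥ i (f i ⊓ b) := by
      ext j
      rcases eq_or_ne j i with rfl | hj <;> simp [*]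
    refine hf (Function.update ⊥ i b) (by simpa [Function.update_eq_self_iff]) ?_
    rw [hinf, hfb, Function.update_eq_self_iff]
    rfl
  · intro hf g hg hfg
    obtain ⟨i, hi⟩ := not_forall.1 (mt Pi.eq_bot_iff.2 hg)
    exact hf i (g i) hi (congrFun hfg i)

theorem Pi.isCoatom_iff {ι : Type*} {α : ι → Type*} [∀ i, PartialOrder (α i)]
    [∀ i, OrderTop (α i)] {f : ∀ i, α i} :
    IsCoatom f ↔ ∃ i, IsCoatom (f i) ∧ ∀ j, j ≠ i → f j = ⊤ := by
  simp only [← covBy_top_iff, Pi.covBy_iff, top_apply]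

def essentialCoatomInf (α : Type*) [CompleteLattice α] : α :=
  sInf {a | IsCoatom a ∧ IsEssential a}

section CompleteLattice

variable [CompleteLattice α] [CompleteLattice β]

theorem essentialCoatomInf_le {a : α} (hc : IsCoatom a) (he : IsEssential a) :
    essentialCoatomInf α ≤ a :=
  sInf_le ⟨hc, he⟩

theorem le_essentialCoatomInf {b : α} (h : ∀ a, IsCoatom a → IsEssential a → b ≤ a) :
    b ≤ essentialCoatomInf α :=
  le_sInf fun a ⟨hc, he⟩ => h a hc he

theorem OrderIso.map_essentialCoatomInf_le (φ : α ≃o β) :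
    φ (essentialCoatomInf α) ≤ essentialCoatomInf β :=
  le_essentialCoatomInf fun b hc he => φ.le_symm_apply.1 <| essentialCoatomInf_le
    ((φ.symm.isCoatom_iff b).2 hc) (φ.symm.isEssential_iff.2 he)

theorem OrderIso.map_essentialCoatomInf (φ : α ≃o β) :
    φ (essentialCoatomInf α) = essentialCoatomInf β :=
  φ.map_essentialCoatomInf_le.antisymm <| φ.symm_apply_le.1 φ.symm.map_essentialCoatomInf_le

end CompleteLattice

theorem Pi.essentialCoatomInf_eq {ι : Type*} {α : ι → Type*} [∀ i, CompleteLattice (α i)] :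
    essentialCoatomInf (∀ i, α i) = fun i => essentialCoatomInf (α i) := by
  classical
  refine le_antisymm (fun i => le_essentialCoatomInf fun b hc he => ?_) ?_
  · have hupd : essentialCoatomInf (∀ i, α i) ≤ Function.update ⊤ i b := by
      refine essentialCoatomInf_le (Pi.isCoatom_iff.2 ⟨i, by simpa, fun j hj => ?_⟩)
        (Pi.isEssential_iff.2 fun j => ?_)
      · simp [hj]
      · rcases eq_or_ne j i with rfl | hj
        · simpa
        · simpa [hj] using isEssential_top
    simpa using hupd i
  · refine le_essentialCoatomInf fun f hc he j => ?_
    obtain ⟨i, hi, htop⟩ := Pi.isCoatom_iff.1 hc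
    rcases eq_or_ne j i with rfl | hj
    · exact essentialCoatomInf_le hi (Pi.isEssential_iff.1 he j)
    · simp [htop j hj]

end Essential

theorem zhouRadical_eq_essentialCoatomInf (R : Type*) [Ring R] :
    zhouRadical R = (essentialCoatomInf (Submodule Rᵐᵒᵖ R) : Set R) := by
  ext x
  simp [zhouRadical, essentialCoatomInf, IsEssentialRI, IsEssential]

section RightIdealPi

variable {ι : Type*} {Rs : ι → Type*} [∀ i, Ring (Rs i)]

def rightIdealPi (I : ∀ i, Submodule (Rs i)ᵐᵒᵖ (Rs i)) :
    Submodule (∀ i, Rs i)ᵐᵒᵖ (∀ i, Rs i) where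
  carrier := {x | ∀ i, x i ∈ I i}
  add_mem' hx hy i := (I i).add_mem (hx i) (hy i)
  zero_mem' i := (I i).zero_mem
  smul_mem' c _ hx i := (I i).smul_mem (op (c.unop i)) (hx i)

theorem mem_rightIdealPi {I : ∀ i, Submodule (Rs i)ᵐᵒᵖ (Rs i)} {x : ∀ i, Rs i} :
    x ∈ rightIdealPi I ↔ ∀ i, x i ∈ I i :=
  Iff.rfl

def rightIdealEval (J : Submodule (∀ i, Rs i)ᵐᵒᵖ (∀ i, Rs i)) (i : ι) :
    Submodule (Rs i)ᵐᵒᵖ (Rs i) where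
  carrier := {a | ∃ x ∈ J, x i = a}
  add_mem' := by
    rintro _ _ ⟨x, hx, rfl⟩ ⟨y, hy, rfl⟩
    exact ⟨x + y, J.add_mem hx hy, rfl⟩
  zero_mem' := ⟨0, J.zero_mem, rfl⟩
  smul_mem' := by
    classical
    rintro c _ ⟨x, hx, rfl⟩
    exact ⟨op (Pi.single i c.unop) • x, J.smul_mem _ hx, by simp⟩

def rightIdealPiOrderIso [Finite ι] :
    (∀ i, Submodule (Rs i)ᵐᵒᵖ (Rs i)) ≃o Submodule (∀ i, Rs i)ᵐᵒᵖ (∀ i, Rs i) :=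
  Equiv.toOrderIso
    { toFun := rightIdealPi
      invFun := rightIdealEval
      left_inv I := by
        classical
        funext i
        ext a
        refine ⟨fun ⟨x, hx, hxa⟩ => hxa ▸ hx i, fun ha => ⟨Pi.single i a, fun j => ?_, by simp⟩⟩
        rcases eq_or_ne j i with rfl | hj
        · simpa
        · simp [hj]
      right_inv J := by
        classical
        have := Fintype.ofFinite ι
        ext x
        refine ⟨fun hx => ?_, fun hx i => ⟨x, hx, rfl⟩⟩
        choose y hyJ hyx using hx
        rw [← Finset.univ_sum_single x]
        refine J.sum_mem fun i _ => ?_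
        have : Pi.single i (x i) = op (Pi.single i (1 : Rs i)) • y i := by
          rw [op_smul_eq_mul, ← Pi.single_mul_right, mul_one, hyx]
        exact this ▸ J.smul_mem _ (hyJ i) }
    (fun _ _ h _ hx i => h i (hx i))
    (fun _ _ h _ _ ⟨x, hx, hxa⟩ => ⟨x, h hx, hxa⟩)

end RightIdealPi

theorem mem_zhouRadical_pi {ι : Type*} [Finite ι] {Rs : ι → Type*} [∀ i, Ring (Rs i)]
    {x : ∀ i, Rs i} : x ∈ zhouRadical (∀ i, Rs i) ↔ ∀ i, x i ∈ zhouRadical (Rs i) := by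
  simp only [zhouRadical_eq_essentialCoatomInf, SetLike.mem_coe,
    ← rightIdealPiOrderIso.map_essentialCoatomInf, Pi.essentialCoatomInf_eq]
  exact mem_rightIdealPi

theorem IsNilpotent.pi_single {ι : Type*} [DecidableEq ι] {R : ι → Type*}
    [∀ i, MonoidWithZero (R i)] {i : ι} {a : R i} (ha : IsNilpotent a) :
    IsNilpotent (Pi.single i a) := by
  obtain ⟨n, hn⟩ := ha
  refine ⟨n + 1, funext fun j => ?_⟩
  rcases eq_or_ne j i with rfl | hj
  · simpa using pow_eq_zero_of_le n.le_succ hn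
  · simp [hj]

theorem prod_zhou_right_reduced_iff_general (ι : Type*) [Fintype ι] (Rs : ι → Type*)
    [∀ i, Ring (Rs i)] (e : ∀ i, Rs i) :
    (∀ i, ∀ a : Rs i, IsNilpotent a → a * e i ∈ zhouRadical (Rs i)) ↔
      (∀ a : (∀ i, Rs i), IsNilpotent a → a * e ∈ zhouRadical (∀ i, Rs i)) := by
  classical
  refine ⟨fun h a ha => mem_zhouRadical_pi.2 fun i => h i (a i) (ha.map (Pi.evalRingHom Rs i)),
    fun h i a ha => ?_⟩
  simpa using mem_zhouRadical_pi.1 (h _ ha.pi_single) i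

/-- Let `R₁, …, Rₙ` be finitely many rings with idempotents `eᵢ ∈ Rᵢ`, `R = ∏ Rᵢ` and
`e = (e₁, …, eₙ)`. Then each `Rᵢ` is Zhou right `eᵢ`-reduced iff `R` is Zhou right
`e`-reduced. -/
theorem prod_zhou_right_reduced_iff (ι : Type*) [Fintype ι] (Rs : ι → Type*)
    [∀ i, Ring (Rs i)] (e : ∀ i, Rs i) (he : ∀ i, IsIdempotentElem (e i)) :
    (∀ i, ∀ a : Rs i, IsNilpotent a → a * e i ∈ zhouRadical (Rs i)) ↔
      (∀ a : (∀ i, Rs i), IsNilpotent a → a * e ∈ zhouRadical (∀ i, Rs i)) :=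
  prod_zhou_right_reduced_iff_general ι Rs e
end

section
/- If R is Zhou right e-reduced for an idempotent e, then the corner ring eRe is Zhou right f-reduced for every idempotent f ∈ eRe. In particular, eRe is Zhou right e-reduced, using δ(eRe) = eδ(R)e. -/
open MulOpposite

/-! For an essential maximal right ideal `J` of the corner ring `S = eRe`, the right ideal
`N = {w ∈ R | e w R e ⊆ J}` of `R` is maximal and essential, and `eNe ⊆ J`. Hence every element
`x` of the Zhou radical of `R` lies in `N`, so `exe ∈ J`: that is, `e δ(R) e ⊆ δ(eRe)`. A nilpotent
`a ∈ eRe` satisfies `a = a e ∈ δ(R)` by `e`-reducedness, so `a ∈ δ(eRe)`, and `δ(eRe)` is a right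
ideal of `eRe`. -/

section Corner

variable {R : Type*} [Ring R] {e : R}

def corner (e : R) : Set R := {x | e * x * e = x}

theorem mem_corner {x : R} : x ∈ corner e ↔ e * x * e = x := Iff.rfl

theorem zero_mem_corner : (0 : R) ∈ corner e := by
  rw [mem_corner, mul_zero, zero_mul]

theorem add_mem_corner {x y : R} (hx : x ∈ corner e) (hy : y ∈ corner e) :
    x + y ∈ corner e := by
  rw [mem_corner, mul_add, add_mul, hx, hy]

theorem neg_mem_corner {x : R} (hx : x ∈ corner e) : -x ∈ corner e := by
  rw [mem_corner, mul_neg, neg_mul, hx]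

namespace IsIdempotentElem

theorem mul_mul_mem_corner (he : IsIdempotentElem e) (x : R) : e * x * e ∈ corner e := by
  simp only [mem_corner, ← mul_assoc, he.eq, he.mul_mul_self]

theorem mem_corner_self (he : IsIdempotentElem e) : e ∈ corner e := by
  rw [mem_corner, he.eq, he.eq]

theorem left_mul_of_mem_corner (he : IsIdempotentElem e) {x : R} (hx : x ∈ corner e) :
    e * x = x := by
  rw [← hx, ← mul_assoc, ← mul_assoc, he.eq]

theorem right_mul_of_mem_corner (he : IsIdempotentElem e) {x : R} (hx : x ∈ corner e) :
    x * e = x := by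
  rw [← hx, he.mul_mul_self]

theorem mul_mem_corner (he : IsIdempotentElem e) {x y : R} (hx : x ∈ corner e)
    (hy : y ∈ corner e) : x * y ∈ corner e := by
  rw [mem_corner, ← mul_assoc, he.left_mul_of_mem_corner hx, mul_assoc,
    he.right_mul_of_mem_corner hy]

end IsIdempotentElem

theorem isRI_image_corner (he : IsIdempotentElem e) (K : Submodule Rᵐᵒᵖ R) :
    IsRI (corner e) ((fun k => e * k * e) '' K) := by
  refine ⟨?_, ⟨0, K.zero_mem, by simp⟩, ?_, ?_, ?_⟩
  · rintro _ ⟨k, -, rfl⟩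
    exact he.mul_mul_mem_corner k
  · rintro _ ⟨k, hk, rfl⟩ _ ⟨l, hl, rfl⟩
    exact ⟨k + l, K.add_mem hk hl, by simp only [mul_add, add_mul]⟩
  · rintro _ ⟨k, hk, rfl⟩
    exact ⟨-k, K.neg_mem hk, by simp only [mul_neg, neg_mul]⟩
  · rintro _ ⟨k, hk, rfl⟩ y hy
    refine ⟨k * (e * y), by simpa using K.smul_mem (op (e * y)) hk, ?_⟩
    simp only [mul_assoc, he.right_mul_of_mem_corner hy]

namespace IsRI

variable {J : Set R}

theorem eq_corner_of_mem (he : IsIdempotentElem e) (hJ : IsRI (corner e) J) (heJ : e ∈ J) :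
    J = corner e :=
  hJ.1.antisymm fun x hx => he.left_mul_of_mem_corner hx ▸ hJ.2.2.2.2 e heJ x hx

def liftCorner (hJ : IsRI (corner e) J) : Submodule Rᵐᵒᵖ R where
  carrier := {w | ∀ r, e * (w * r) * e ∈ J}
  zero_mem' _ := by simpa using hJ.2.1
  add_mem' hw hv r := by simpa only [add_mul, mul_add] using hJ.2.2.1 _ (hw r) _ (hv r)
  smul_mem' c w hw r := by simpa [mul_assoc] using hw (c.unop * r)

variable {hJ : IsRI (corner e) J}

theorem mem_liftCorner {w : R} : w ∈ hJ.liftCorner ↔ ∀ r, e * (w * r) * e ∈ J := Iff.rfl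

theorem mul_mul_mem_of_mem_liftCorner {w : R} (hw : w ∈ hJ.liftCorner) : e * w * e ∈ J := by
  simpa using hw 1

theorem mul_mem_liftCorner (he : IsIdempotentElem e) {k : R} (hk : e * k * e ∈ J) :
    k * e ∈ hJ.liftCorner := fun r => by
  have hfactor : e * (k * e * r) * e = e * k * e * (e * r * e) := by
    simp only [mul_assoc, he.mul_self_mul]
  rw [hfactor]
  exact hJ.2.2.2.2 _ hk _ (he.mul_mul_mem_corner r)

theorem one_sub_mem_liftCorner (he : IsIdempotentElem e) : 1 - e ∈ hJ.liftCorner := fun r => by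
  rw [← mul_assoc e, he.mul_one_sub_self, zero_mul, zero_mul]
  exact hJ.2.1

end IsRI

variable {J : Set R}

theorem IsMaxRI.exists_add_mul_eq (he : IsIdempotentElem e) (hJ : IsMaxRI (corner e) J)
    {u : R} (hu : u ∈ corner e) (huJ : u ∉ J) : ∃ j ∈ J, ∃ t ∈ corner e, j + u * t = e := by
  obtain ⟨⟨hJS, hJ0, hJadd, hJneg, hJmul⟩, -, hJmax⟩ := hJ
  set K : Set R := {x | ∃ j ∈ J, ∃ t ∈ corner e, j + u * t = x}
  have hK : IsRI (corner e) K := by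
    refine ⟨?_, ⟨0, hJ0, 0, zero_mem_corner, by simp⟩, ?_, ?_, ?_⟩
    · rintro _ ⟨j, hj, t, ht, rfl⟩
      exact add_mem_corner (hJS hj) (he.mul_mem_corner hu ht)
    · rintro _ ⟨j, hj, t, ht, rfl⟩ _ ⟨j', hj', t', ht', rfl⟩
      exact ⟨j + j', hJadd _ hj _ hj', t + t', add_mem_corner ht ht', by rw [mul_add]; abel⟩
    · rintro _ ⟨j, hj, t, ht, rfl⟩
      exact ⟨-j, hJneg _ hj, -t, neg_mem_corner ht, by rw [mul_neg, neg_add]⟩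
    · rintro _ ⟨j, hj, t, ht, rfl⟩ y hy
      exact ⟨j * y, hJmul _ hj _ hy, t * y, he.mul_mem_corner ht hy, by
        rw [add_mul, mul_assoc]⟩
  have huK : u ∈ K := ⟨0, hJ0, e, he.mem_corner_self, by
    rw [zero_add, he.right_mul_of_mem_corner hu]⟩
  rcases hJmax K hK fun j hj => ⟨j, hj, 0, zero_mem_corner, by rw [mul_zero, add_zero]⟩ with
    hKJ | hKS
  · exact absurd (hKJ ▸ huK) huJ
  · exact (hKS ▸ he.mem_corner_self : e ∈ K)

theorem IsMaxRI.isCoatom_liftCorner (he : IsIdempotentElem e) (hJ : IsMaxRI (corner e) J) :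
    IsCoatom hJ.1.liftCorner := by
  refine ⟨fun htop => hJ.2.1 (hJ.1.eq_corner_of_mem he ?_), fun N hN => ?_⟩
  · simpa only [he.eq] using
      IsRI.mul_mul_mem_of_mem_liftCorner (htop ▸ Submodule.mem_top : e ∈ hJ.1.liftCorner)
  obtain ⟨y, hyN, hy⟩ := SetLike.exists_of_lt hN
  obtain ⟨r, hr⟩ : ∃ r, e * (y * r) * e ∉ J := by simpa [IsRI.mem_liftCorner] using hy
  obtain ⟨j, hj, t, ht, hjt⟩ := hJ.exists_add_mul_eq he (he.mul_mul_mem_corner _) hr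
  -- `e = (e - y r e t) + y (r e t)`, and `e (e - y r e t) e = j`.
  have hz : y * (r * e * t) ∈ N := by simpa using N.smul_mem (op (r * e * t)) hyN
  have hw : e - y * (r * e * t) ∈ hJ.1.liftCorner := by
    have hcorner : e * (e - y * (r * e * t)) * e = j := by
      rw [eq_sub_of_add_eq hjt, mul_sub, sub_mul, he.eq, he.eq]
      simp only [mul_assoc, he.right_mul_of_mem_corner ht]
    rw [← hcorner] at hj
    simpa only [sub_mul, he.eq, mul_assoc, he.right_mul_of_mem_corner ht] using
      IsRI.mul_mem_liftCorner he hj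
  have heN : e ∈ N := by simpa using N.add_mem (hN.le hw) hz
  have h1N : (1 : R) ∈ N := by simpa using N.add_mem (hN.le (IsRI.one_sub_mem_liftCorner he)) heN
  exact Submodule.eq_top_iff'.mpr fun x => by simpa using N.smul_mem (op x) h1N

theorem IsRI.isEssentialRI_liftCorner (he : IsIdempotentElem e) (hJ : IsRI (corner e) J)
    (hJess : IsEssRI (corner e) J) : IsEssentialRI R hJ.liftCorner := by
  intro K hK hNK
  by_cases hc : ∃ k ∈ K, e * k * e ≠ 0
  · obtain ⟨k, hk, hk0⟩ := hc
    obtain ⟨_, ⟨hvJ, l, hl, rfl⟩, hv0⟩ : ∃ v ∈ J ∩ (fun k => e * k * e) '' K, v ≠ 0 := by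
      by_contra! h
      refine hJess _ (isRI_image_corner he K) (fun hK0 => hk0 ?_) ?_
      · exact Set.mem_singleton_iff.mp (hK0 ▸ Set.mem_image_of_mem (fun k => e * k * e) hk)
      · exact Set.eq_singleton_iff_unique_mem.mpr ⟨⟨hJ.2.1, 0, K.zero_mem, by simp⟩, h⟩
    have hlN : l * e ∈ hJ.liftCorner ⊓ K :=
      ⟨hJ.mul_mem_liftCorner he hvJ, by simpa using K.smul_mem (op e) hl⟩
    rw [hNK, Submodule.mem_bot] at hlN
    exact hv0 (by simp only [mul_assoc, hlN, mul_zero])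
  · push Not at hc
    have hKN : K ≤ hJ.liftCorner := fun k hk r => by
      simpa [hc _ (by simpa using K.smul_mem (op r) hk)] using hJ.2.1
    exact hK (hNK ▸ (inf_eq_right.mpr hKN).symm)

theorem IsIdempotentElem.mul_mul_mem_zhouSet_corner (he : IsIdempotentElem e) {x : R}
    (hx : x ∈ zhouRadical R) : e * x * e ∈ zhouSet (corner e) :=
  ⟨he.mul_mul_mem_corner x, fun _ hJ hJess => hJ.1.mul_mul_mem_of_mem_liftCorner
    (hx _ (hJ.isCoatom_liftCorner he) (hJ.1.isEssentialRI_liftCorner he hJess))⟩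

end Corner

theorem mul_mem_zhouSet {R : Type*} [Ring R] {I : Set R} (hI : ∀ x ∈ I, ∀ y ∈ I, x * y ∈ I)
    {x y : R} (hx : x ∈ zhouSet I) (hy : y ∈ I) : x * y ∈ zhouSet I :=
  ⟨hI x hx.1 y hy, fun J hJ hJess => hJ.1.2.2.2.2 x (hx.2 J hJ hJess) y hy⟩

theorem corner_zhou_right_reduced_general (R : Type*) [Ring R]
    (e : R) (he : IsIdempotentElem e)
    (hred : ∀ a : R, IsNilpotent a → a * e ∈ zhouRadical R)
    (f : R) (hfmem : e * f * e = f) :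
    ∀ a : R, e * a * e = a → IsNilpotent a →
      a * f ∈ zhouSet {x : R | e * x * e = x} := by
  intro a ha hnil
  have haδ : a ∈ zhouSet (corner e) := by
    simpa only [he.right_mul_of_mem_corner ha, ha] using
      he.mul_mul_mem_zhouSet_corner (hred a hnil)
  exact mul_mem_zhouSet (fun _ hx _ hy => he.mul_mem_corner hx hy) haδ hfmem

/-- If `R` is Zhou right `e`-reduced for an idempotent `e`, then the corner ring
`eRe = {x : R | e * x * e = x}` is Zhou right `f`-reduced for every idempotent
`f ∈ eRe`: every nilpotent `a ∈ eRe` satisfies `a * f ∈ δ(eRe)`. -/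
theorem corner_zhou_right_reduced (R : Type*) [Ring R]
    (e : R) (he : IsIdempotentElem e)
    (hred : ∀ a : R, IsNilpotent a → a * e ∈ zhouRadical R)
    (f : R) (hfmem : e * f * e = f) (hf : IsIdempotentElem f) :
    ∀ a : R, e * a * e = a → IsNilpotent a →
      a * f ∈ zhouSet {x : R | e * x * e = x} :=
  corner_zhou_right_reduced_general R e he hred f hfmem
end

section
/- Let R be a ring and s a central element, and let Kₛ(R) be the generalized matrix ring on 2×2 matrices over R with multiplication [a₁ x₁; y₁ b₁][a₂ x₂; y₂ b₂] = [a₁a₂ + s x₁y₂, a₁x₂ + x₁b₂; y₁a₂ + b₁y₂, s y₁x₂ + b₁b₂]. For s = 0, a matrix A = [a x; y b] ∈ K₀(R) is nilpotent if and only if a and b are nilpotent in R. -/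
/-- Multiplication of the generalized matrix ring `Kₛ(R)`: an element `[a x; y b]` is
encoded as the quadruple `(a, x, y, b)`, and
`[a₁ x₁; y₁ b₁][a₂ x₂; y₂ b₂] =
  [a₁a₂ + s·x₁y₂, a₁x₂ + x₁b₂; y₁a₂ + b₁y₂, s·y₁x₂ + b₁b₂]`. -/
def ksMul {R : Type*} [Ring R] (s : R) (A B : R × R × R × R) : R × R × R × R :=
  (A.1 * B.1 + s * A.2.1 * B.2.2.1,
   A.1 * B.2.1 + A.2.1 * B.2.2.2,
   A.2.2.1 * B.1 + A.2.2.2 * B.2.2.1,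
   s * A.2.2.1 * B.2.1 + A.2.2.2 * B.2.2.2)

/-- Powers in the generalized matrix ring `Kₛ(R)`, the identity being `[1 0; 0 1]`. -/
def ksPow {R : Type*} [Ring R] (s : R) (A : R × R × R × R) : ℕ → R × R × R × R
  | 0 => (1, 0, 0, 1)
  | n + 1 => ksMul s (ksPow s A n) A

/-!
With `s = 0` the diagonal `A ↦ (a, b)` is multiplicative, and the product of two matrices
with zero diagonal vanishes. So if `a ^ n = 0` and `b ^ n = 0`, then `Aⁿ` has zero diagonal
and `A²ⁿ = Aⁿ Aⁿ = 0`; conversely the diagonal of `Aⁿ = 0` is `(aⁿ, bⁿ)`.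
-/

section

variable {R : Type*} [Ring R]

theorem ksMul_one (s : R) (A : R × R × R × R) : ksMul s A (1, 0, 0, 1) = A := by
  simp [ksMul]

theorem ksMul_assoc {s : R} (hs : ∀ r : R, Commute s r) (A B C : R × R × R × R) :
    ksMul s (ksMul s A B) C = ksMul s A (ksMul s B C) := by
  simp only [ksMul, Prod.mk.injEq]
  refine ⟨?_, ?_, ?_, ?_⟩ <;> simp only [add_mul, mul_add, mul_assoc, (hs _).left_comm] <;>
    abel

theorem ksPow_add {s : R} (hs : ∀ r : R, Commute s r) (A : R × R × R × R) (m n : ℕ) :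
    ksPow s A (m + n) = ksMul s (ksPow s A m) (ksPow s A n) := by
  induction n with
  | zero => exact (ksMul_one s _).symm
  | succ n ih => rw [← add_assoc, ksPow, ih, ksPow, ksMul_assoc hs]

theorem ksPow_zero_fst (A : R × R × R × R) (n : ℕ) : (ksPow 0 A n).1 = A.1 ^ n := by
  induction n with
  | zero => simp [ksPow]
  | succ n ih => simp [ksPow, ksMul, ih, pow_succ]

theorem ksPow_zero_snd_snd_snd (A : R × R × R × R) (n : ℕ) :
    (ksPow 0 A n).2.2.2 = A.2.2.2 ^ n := by
  induction n with
  | zero => simp [ksPow]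
  | succ n ih => simp [ksPow, ksMul, ih, pow_succ]

theorem ksMul_zero_eq_zero_of_diag_eq_zero {P Q : R × R × R × R} (hP₁ : P.1 = 0)
    (hP₂ : P.2.2.2 = 0) (hQ₁ : Q.1 = 0) (hQ₂ : Q.2.2.2 = 0) : ksMul 0 P Q = (0, 0, 0, 0) := by
  simp [ksMul, hP₁, hP₂, hQ₁, hQ₂]

end

/-- In `K₀(R)`, a matrix `A = [a x; y b]` is nilpotent iff `a` and `b` are nilpotent
in `R`. -/
theorem k0_nilpotent_iff (R : Type*) [Ring R] (A : R × R × R × R) :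
    (∃ n : ℕ, 0 < n ∧ ksPow (0 : R) A n = ((0 : R), (0 : R), (0 : R), (0 : R))) ↔
      IsNilpotent A.1 ∧ IsNilpotent A.2.2.2 := by
  constructor
  · rintro ⟨n, -, h⟩
    exact ⟨⟨n, by rw [← ksPow_zero_fst, h]⟩, ⟨n, by rw [← ksPow_zero_snd_snd_snd, h]⟩⟩
  · rintro ⟨⟨m, hm⟩, ⟨k, hk⟩⟩
    have ha : A.1 ^ (m + k + 1) = 0 := pow_eq_zero_of_le (by omega) hm
    have hb : A.2.2.2 ^ (m + k + 1) = 0 := pow_eq_zero_of_le (by omega) hk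
    have hdiag₁ := (ksPow_zero_fst A (m + k + 1)).trans ha
    have hdiag₂ := (ksPow_zero_snd_snd_snd A (m + k + 1)).trans hb
    refine ⟨(m + k + 1) + (m + k + 1), by omega, ?_⟩
    rw [ksPow_add (Commute.zero_left ·)]
    exact ksMul_zero_eq_zero_of_diag_eq_zero hdiag₁ hdiag₂ hdiag₁ hdiag₂
end
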